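/- arXiv:1306.3073 — 6 statements merged into one kernel-verified Lean document; each statement's English description precedes it below -/
import Mathlib

section
/- Let X be a connected, locally connected, locally compact, second-countable metrizable topological space. Let E ⊆ X be a continuum (a nonempty compact connected set) and let U ⊆ X be an open set with E ⊆ U. Then there exists a set F ⊆ X such that F is a continuum, F (with the subspace topology) is locally connected, E ⊆ F ⊆ U, and the complement X \ F has only finitely many connected components. -/
open Set Topology ENNReal

namespace Stmt0Aux

open EMetric

noncomputable section

variable {X : Type*} [MetricSpace X]

lemma finite_pos_min {α : Type*} {s : Set α} (hs : s.Finite) (f : α → ℝ≥0∞)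
    (h : ∀ a ∈ s, 0 < f a) : ∃ δ : ℝ≥0∞, 0 < δ ∧ ∀ a ∈ s, δ ≤ f a := by
  revert h
  refine Set.Finite.induction_on
    (motive := fun t _ => (∀ a ∈ t, 0 < f a) → ∃ δ : ℝ≥0∞, 0 < δ ∧ ∀ a ∈ t, δ ≤ f a) s hs
    (fun _ => ⟨1, one_pos, fun a ha => absurd ha (notMem_empty a)⟩) ?_
  intro a s has hsf ih h
  obtain ⟨δ, hδ, hδle⟩ := ih (fun b hb => h b (mem_insert_of_mem a hb))
  refine ⟨min δ (f a), lt_min hδ (h a (mem_insert a s)), ?_⟩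
  rintro b (rfl | hb)
  · exact min_le_right _ _
  · exact (min_le_left _ _).trans (hδle b hb)

lemma geo (n : ℕ) : ∀ k : ℕ,
    (∑ j ∈ Finset.range k, (2⁻¹ : ℝ≥0∞) ^ (n + 1 + j)) + 2⁻¹ ^ (n + k) = 2⁻¹ ^ n := by
  intro k
  induction k with
  | zero => simp
  | succ k ih =>
    rw [Finset.sum_range_succ]
    have h2 : (2⁻¹ : ℝ≥0∞) ^ (n + 1 + k) + 2⁻¹ ^ (n + (k + 1)) = 2⁻¹ ^ (n + k) := by
      have : n + 1 + k = (n + k) + 1 := by omega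
      rw [this, show n + (k+1) = (n+k)+1 by omega, pow_succ, ← mul_add,
        ENNReal.inv_two_add_inv_two, mul_one]
    rw [add_assoc, h2, ih]

lemma sumle (n k : ℕ) :
    (∑ j ∈ Finset.range k, (2⁻¹ : ℝ≥0∞) ^ (n + 1 + j)) ≤ 2⁻¹ ^ n :=
  le_of_le_of_eq le_self_add (geo n k)

lemma glue {A : Set X} {𝒬 : Set (Set X)} (hA : IsPreconnected A) {a : X} (ha : a ∈ A)
    (hQ : ∀ Q ∈ 𝒬, IsPreconnected Q ∧ (Q ∩ A).Nonempty) (hsub : A ⊆ ⋃₀ 𝒬) :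
    IsPreconnected (⋃₀ 𝒬) := by
  have he : ⋃₀ 𝒬 = ⋃₀ {S | ∃ Q ∈ 𝒬, S = Q ∪ A} := by
    ext x
    constructor
    · rintro ⟨Q, hQm, hx⟩
      exact ⟨Q ∪ A, ⟨Q, hQm, rfl⟩, Or.inl hx⟩
    · rintro ⟨S, ⟨Q, hQm, rfl⟩, hx | hx⟩
      · exact ⟨Q, hQm, hx⟩
      · exact hsub hx
  rw [he]
  apply isPreconnected_sUnion a
  · rintro S ⟨Q, hQm, rfl⟩
    exact Or.inr ha
  · rintro S ⟨Q, hQm, rfl⟩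
    exact (hQ Q hQm).1.union' (hQ Q hQm).2 hA

/-- Cover a compact set by finitely many small connected open pieces inside `V`. -/
lemma cover [LocallyConnectedSpace X] {K V : Set X} (hK : IsCompact K) (hV : IsOpen V)
    (hKV : K ⊆ V) {ε : ℝ≥0∞} (hε : 0 < ε) :
    ∃ 𝒬 : Set (Set X), 𝒬.Finite ∧
      (∀ Q ∈ 𝒬, IsOpen Q ∧ IsPreconnected Q ∧ closure Q ⊆ V ∧ EMetric.diam Q ≤ ε ∧
        (Q ∩ K).Nonempty) ∧ K ⊆ ⋃₀ 𝒬 := by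
  -- for each x ∈ K choose a small radius
  have key : ∀ x : X, x ∈ K → ∃ s : ℝ≥0∞, 0 < s ∧ EMetric.closedBall x s ⊆ V ∧ 2 * s ≤ ε := by
    intro x hx
    obtain ⟨r, hr0, hrV⟩ := EMetric.nhds_basis_eball.mem_iff.1 (hV.mem_nhds (hKV hx))
    have hr1 : (0:ℝ≥0∞) < min r 1 := lt_min hr0 one_pos
    refine ⟨min (min r 1 / 2) (ε / 2), ?_, ?_, ?_⟩
    · exact lt_min (ENNReal.half_pos hr1.ne') (ENNReal.half_pos hε.ne')
    · intro y hy
      apply hrV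
      have h1 : edist y x ≤ min r 1 / 2 := le_trans hy (min_le_left _ _)
      have h2 : min r 1 / 2 < min r 1 :=
        ENNReal.half_lt_self hr1.ne' (ne_top_of_le_ne_top ENNReal.one_ne_top (min_le_right _ _))
      exact EMetric.mem_ball.2 (lt_of_le_of_lt h1 (h2.trans_le (min_le_left r 1)))
    · calc 2 * min (min r 1 / 2) (ε / 2) ≤ 2 * (ε / 2) := by
            exact mul_le_mul_right (min_le_right _ _) 2
        _ ≤ ε := ENNReal.mul_div_le.trans le_rfl
  choose! s hs0 hsV hsε using key
  set P : X → Set X := fun x => connectedComponentIn (EMetric.ball x (s x)) x with hP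
  have hPopen : ∀ x ∈ K, IsOpen (P x) := fun x _ => EMetric.isOpen_ball.connectedComponentIn
  have hPmem : ∀ x ∈ K, x ∈ P x := fun x hx =>
    mem_connectedComponentIn (EMetric.mem_ball_self (hs0 x hx))
  obtain ⟨t, ht⟩ := hK.elim_finite_subcover (fun x : K => P x)
    (fun x => hPopen x x.2) (fun x hx => mem_iUnion.2 ⟨⟨x, hx⟩, hPmem x hx⟩)
  refine ⟨(fun x : K => P x) '' t, (t.finite_toSet.image _), ?_, ?_⟩
  · rintro Q ⟨x, hxt, rfl⟩
    have hxK : (x : X) ∈ K := x.2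
    refine ⟨hPopen x hxK, isPreconnected_connectedComponentIn, ?_, ?_, ⟨x, hPmem x hxK, hxK⟩⟩
    · refine subset_trans (closure_mono (connectedComponentIn_subset _ _)) ?_
      refine subset_trans ?_ (hsV x hxK)
      have hcl : IsClosed (EMetric.closedBall (x:X) (s x)) :=
        isClosed_le (continuous_id.edist continuous_const) continuous_const
      exact closure_minimal EMetric.ball_subset_closedBall hcl
    · calc EMetric.diam (P (x:X)) ≤ EMetric.diam (EMetric.ball (x:X) (s x)) :=
            EMetric.diam_mono (connectedComponentIn_subset _ _)
        _ ≤ 2 * s x := EMetric.diam_ball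
        _ ≤ ε := hsε x hxK
  · intro x hx
    obtain ⟨i, hit, hxi⟩ := mem_iUnion₂.1 (ht hx)
    exact ⟨P i, ⟨i, hit, rfl⟩, hxi⟩


/-- A good finite family of small connected open pieces covering `closure A`. -/
def Good (V : Set X) (ε : ℝ≥0∞) (A : Set X) (𝒬 : Set (Set X)) : Prop :=
  𝒬.Finite ∧ (∀ Q ∈ 𝒬, IsOpen Q ∧ IsPreconnected Q ∧ closure Q ⊆ V ∧
    EMetric.diam Q ≤ ε ∧ (Q ∩ A).Nonempty) ∧ closure A ⊆ ⋃₀ 𝒬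

lemma good_exists [LocallyConnectedSpace X] {V A : Set X} (hV : IsOpen V)
    (hA : IsCompact (closure A)) (hAV : closure A ⊆ V) {ε : ℝ≥0∞} (hε : 0 < ε) :
    ∃ 𝒬, Good V ε A 𝒬 := by
  obtain ⟨𝒬, h1, h2, h3⟩ := cover hA hV hAV hε
  refine ⟨𝒬, h1, fun Q hQ => ?_, h3⟩
  obtain ⟨hQo, hQp, hQc, hQd, y, hyQ, hyA⟩ := h2 Q hQ
  exact ⟨hQo, hQp, hQc, hQd, mem_closure_iff.1 hyA Q hQo hyQ⟩

variable [LocallyConnectedSpace X]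

open Classical in
/-- The recursively chosen families of pieces. -/
def seq (V E : Set X) : ℕ → Set (Set X)
  | 0 => if h : ∃ 𝒬, Good V 1 E 𝒬 then h.choose else ∅
  | (n+1) => if h : ∃ 𝒬, Good V ((2⁻¹:ℝ≥0∞) ^ (n+1)) (⋃₀ seq V E n) 𝒬 then h.choose else ∅

/-- The previous stage set. -/
def prevA (V E : Set X) : ℕ → Set X
  | 0 => E
  | (n+1) => ⋃₀ seq V E n

lemma seq_good {V E L : Set X} (hV : IsOpen V) (hL : IsCompact L) (hVL : V ⊆ L)
    (hE : IsCompact E) (hEne : E.Nonempty) (hEV : E ⊆ V) :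
    ∀ n, Good V ((2⁻¹:ℝ≥0∞) ^ n) (prevA V E n) (seq V E n) := by
  intro n
  induction n with
  | zero =>
    have hex : ∃ 𝒬, Good V 1 E 𝒬 := by
      refine good_exists hV ?_ ?_ one_pos
      · rwa [hE.isClosed.closure_eq]
      · rwa [hE.isClosed.closure_eq]
    have heq : seq V E 0 = hex.choose := by
      rw [seq]; exact dif_pos hex
    rw [show prevA V E 0 = E from rfl, heq, show ((2⁻¹:ℝ≥0∞) ^ 0) = 1 from pow_zero _]
    exact hex.choose_spec
  | succ n ih =>
    obtain ⟨hfin, hQ, -⟩ := ih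
    have hcb : closure (⋃₀ seq V E n) = ⋃ Q ∈ seq V E n, closure Q := by
      rw [sUnion_eq_biUnion]; exact hfin.closure_biUnion _
    have hsubV : closure (⋃₀ seq V E n) ⊆ V := by
      rw [hcb]; exact iUnion₂_subset fun Q hQm => (hQ Q hQm).2.2.1
    have hcomp : IsCompact (closure (⋃₀ seq V E n)) :=
      hL.of_isClosed_subset isClosed_closure (hsubV.trans hVL)
    have hex : ∃ 𝒬, Good V ((2⁻¹:ℝ≥0∞) ^ (n+1)) (⋃₀ seq V E n) 𝒬 :=
      good_exists hV hcomp hsubV (ENNReal.pow_pos (by simp) _)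
    have heq : seq V E (n+1) = hex.choose := by
      rw [seq]; exact dif_pos hex
    rw [show prevA V E (n+1) = ⋃₀ seq V E n from rfl, heq]
    exact hex.choose_spec


lemma exists_S_continuum {E L : Set X} (hE : IsCompact E) (hEne : E.Nonempty)
    (hEp : IsPreconnected E) (hL : IsCompact L) (hEL : E ⊆ interior L) :
    ∃ F' : Set X, IsCompact F' ∧ IsPreconnected F' ∧ F'.Nonempty ∧ E ⊆ F' ∧ F' ⊆ L ∧
      (∀ n : ℕ, ∃ 𝒮 : Set (Set X), 𝒮.Finite ∧ F' ⊆ ⋃₀ 𝒮 ∧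
        ∀ S ∈ 𝒮, IsClosed S ∧ S.Nonempty ∧ S ⊆ F' ∧ IsPreconnected S ∧
          EMetric.diam S ≤ 3 * (2⁻¹:ℝ≥0∞) ^ n) := by
  set V := interior L with hVdef
  have hGood := seq_good (V := V) (E := E) isOpen_interior hL interior_subset hE hEne hEL
  set Wn : ℕ → Set X := fun n => ⋃₀ seq V E n with hWndef
  obtain ⟨a, ha⟩ := hEne
  -- basic facts
  have hWmono : ∀ n, Wn n ⊆ Wn (n+1) := fun n =>
    subset_closure.trans (hGood (n+1)).2.2
  have hWle : ∀ m n, m ≤ n → Wn m ⊆ Wn n := fun m n hmn => by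
    induction n with
    | zero => simp_all
    | succ n ih =>
      rcases Nat.lt_or_ge m (n+1) with h | h
      · exact (ih (by omega)).trans (hWmono n)
      · have : m = n+1 := by omega
        subst this; exact subset_rfl
  have hEW0 : E ⊆ Wn 0 := subset_closure.trans (hGood 0).2.2
  have hWsubV : ∀ n, Wn n ⊆ V := by
    intro n x hx
    obtain ⟨Q, hQm, hxQ⟩ := hx
    exact ((hGood n).2.1 Q hQm).2.2.1 (subset_closure hxQ)
  have hWpre : ∀ n, IsPreconnected (Wn n) := by
    intro n
    induction n with
    | zero =>
      exact glue hEp ha (fun Q hQ => ⟨((hGood 0).2.1 Q hQ).2.1,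
        ((hGood 0).2.1 Q hQ).2.2.2.2⟩) hEW0
    | succ n ih =>
      exact glue ih (hEW0.trans (hWle 0 n (Nat.zero_le n)) ha)
        (fun Q hQ => ⟨((hGood (n+1)).2.1 Q hQ).2.1,
          ((hGood (n+1)).2.1 Q hQ).2.2.2.2⟩) (hWmono n)
  set W : Set X := ⋃ n, Wn n with hWdef
  have haW : a ∈ W := mem_iUnion.2 ⟨0, hEW0 ha⟩
  have hWpreW : IsPreconnected W := by
    rw [hWdef, ← sUnion_range]
    apply isPreconnected_sUnion a
    · rintro S ⟨n, rfl⟩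
      exact hWle 0 n (Nat.zero_le n) (hEW0 ha)
    · rintro S ⟨n, rfl⟩
      exact hWpre n
  have hWV : W ⊆ V := iUnion_subset hWsubV
  refine ⟨closure W, ?_, hWpreW.closure, ⟨a, subset_closure haW⟩,
    (hEW0.trans (subset_iUnion_of_subset 0 subset_rfl)).trans subset_closure, ?_, ?_⟩
  · exact hL.of_isClosed_subset isClosed_closure
      ((closure_mono hWV).trans (closure_minimal interior_subset hL.isClosed))
  · exact (closure_mono hWV).trans (closure_minimal interior_subset hL.isClosed)
  -- property S
  intro n
  -- claim: every point of a later stage connects back to a stage-n piece by a small set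
  have claim1 : ∀ k, ∀ x ∈ Wn (n+k), ∃ P ∈ seq V E n, ∃ S : Set X, S ⊆ W ∧
      IsPreconnected S ∧ x ∈ S ∧ (S ∩ P).Nonempty ∧
      EMetric.diam S ≤ ∑ j ∈ Finset.range k, (2⁻¹:ℝ≥0∞) ^ (n+1+j) := by
    intro k
    induction k with
    | zero =>
      intro x hx
      obtain ⟨P, hPm, hxP⟩ := hx
      refine ⟨P, hPm, {x}, ?_, isPreconnected_singleton, rfl, ⟨x, rfl, hxP⟩, ?_⟩
      · exact (singleton_subset_iff.2 (mem_iUnion.2 ⟨n, ⟨P, hPm, hxP⟩⟩))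
      · simp only [Finset.range_zero, Finset.sum_empty]; exact EMetric.diam_singleton.le
    | succ k ih =>
      intro x hx
      obtain ⟨Q, hQm, hxQ⟩ := hx
      have hQfacts := (hGood (n+k+1)).2.1 Q (by rwa [show n+(k+1) = n+k+1 by omega] at hQm)
      obtain ⟨y, hyQ, hyW⟩ := hQfacts.2.2.2.2
      obtain ⟨P, hPm, S, hSW, hSp, hyS, hSP, hSd⟩ := ih y hyW
      refine ⟨P, hPm, S ∪ Q, ?_, hSp.union' ⟨y, hyS, hyQ⟩ hQfacts.2.1, Or.inr hxQ,
        hSP.mono (inter_subset_inter_left _ subset_union_left), ?_⟩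
      · refine union_subset hSW ?_
        intro z hz
        exact mem_iUnion.2 ⟨n+k+1, ⟨Q, hQm, hz⟩⟩
      · calc EMetric.diam (S ∪ Q) ≤ EMetric.diam S + EMetric.diam Q :=
              EMetric.diam_union' ⟨y, hyS, hyQ⟩
          _ ≤ (∑ j ∈ Finset.range k, (2⁻¹:ℝ≥0∞) ^ (n+1+j)) + (2⁻¹:ℝ≥0∞) ^ (n+k+1) :=
              add_le_add hSd hQfacts.2.2.2.1
          _ = ∑ j ∈ Finset.range (k+1), (2⁻¹:ℝ≥0∞) ^ (n+1+j) := by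
              rw [Finset.sum_range_succ, show n+1+k = n+k+1 by omega]
  -- the pieces of the property-S decomposition
  set 𝒞 : Set X → Set (Set X) := fun P =>
    {S | S ⊆ W ∧ IsPreconnected S ∧ (S ∩ P).Nonempty ∧ EMetric.diam S ≤ (2⁻¹:ℝ≥0∞) ^ n} with h𝒞
  set T : Set X → Set X := fun P => P ∪ ⋃₀ 𝒞 P with hT
  have hPieces := (hGood n).2.1
  have hTsubW : ∀ P ∈ seq V E n, T P ⊆ W := by
    intro P hPm
    refine union_subset ?_ (sUnion_subset fun S hS => hS.1)
    intro z hz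
    exact mem_iUnion.2 ⟨n, ⟨P, hPm, hz⟩⟩
  have hTpre : ∀ P ∈ seq V E n, IsPreconnected (T P) := by
    intro P hPm
    obtain ⟨p₀, hp₀P, -⟩ := (hPieces P hPm).2.2.2.2
    have he : T P = ⋃₀ {R | R = P ∨ ∃ S ∈ 𝒞 P, R = S ∪ P} := by
      apply Subset.antisymm
      · rintro x (hx | ⟨S, hS, hxS⟩)
        · exact ⟨P, Or.inl rfl, hx⟩
        · exact ⟨S ∪ P, Or.inr ⟨S, hS, rfl⟩, Or.inl hxS⟩
      · rintro x ⟨R, (rfl | ⟨S, hS, rfl⟩), hxR⟩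
        · exact Or.inl hxR
        · rcases hxR with h | h
          · exact Or.inr ⟨S, hS, h⟩
          · exact Or.inl h
    rw [he]
    apply isPreconnected_sUnion p₀
    · rintro R (hR | ⟨S, hS, hR⟩) <;> rw [hR]
      · exact hp₀P
      · exact Or.inr hp₀P
    · rintro R (hR | ⟨S, hS, hR⟩) <;> rw [hR]
      · exact (hPieces P hPm).2.1
      · exact hS.2.1.union' hS.2.2.1 (hPieces P hPm).2.1
  have hTdiam : ∀ P ∈ seq V E n, EMetric.diam (T P) ≤ 3 * (2⁻¹:ℝ≥0∞) ^ n := by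
    intro P hPm
    have hnear : ∀ b ∈ T P, ∃ pb ∈ P, edist b pb ≤ (2⁻¹:ℝ≥0∞) ^ n := by
      rintro b (hb | ⟨S, hS, hbS⟩)
      · exact ⟨b, hb, by simp⟩
      · obtain ⟨w, hwS, hwP⟩ := hS.2.2.1
        exact ⟨w, hwP, (EMetric.edist_le_diam_of_mem hbS hwS).trans hS.2.2.2⟩
    apply EMetric.diam_le
    intro b hb c hc
    obtain ⟨pb, hpb, hbd⟩ := hnear b hb
    obtain ⟨pc, hpc, hcd⟩ := hnear c hc
    calc edist b c ≤ edist b pb + edist pb pc + edist pc c := edist_triangle4 _ _ _ _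
      _ ≤ (2⁻¹:ℝ≥0∞) ^ n + (2⁻¹:ℝ≥0∞) ^ n + (2⁻¹:ℝ≥0∞) ^ n := by
          refine add_le_add (add_le_add hbd ?_) ?_
          · exact (EMetric.edist_le_diam_of_mem hpb hpc).trans (hPieces P hPm).2.2.2.1
          · rw [edist_comm]; exact hcd
      _ = 3 * (2⁻¹:ℝ≥0∞) ^ n := by ring
  have hWcov : W ⊆ ⋃ P ∈ seq V E n, T P := by
    intro x hx
    obtain ⟨m, hm⟩ := mem_iUnion.1 hx
    have hx' : x ∈ Wn (n + m) := hWle m (n+m) (by omega) hm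
    obtain ⟨P, hPm, S, hSW, hSp, hxS, hSP, hSd⟩ := claim1 m x hx'
    refine mem_iUnion₂.2 ⟨P, hPm, Or.inr ⟨S, ⟨hSW, hSp, hSP, hSd.trans (sumle n m)⟩, hxS⟩⟩
  refine ⟨(fun P => closure (T P)) '' (seq V E n), (hGood n).1.image _, ?_, ?_⟩
  · calc closure W ⊆ closure (⋃ P ∈ seq V E n, T P) := closure_mono hWcov
      _ = ⋃ P ∈ seq V E n, closure (T P) := (hGood n).1.closure_biUnion _
      _ ⊆ ⋃₀ ((fun P => closure (T P)) '' (seq V E n)) := by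
          intro x hx
          obtain ⟨P, hPm, hxP⟩ := mem_iUnion₂.1 hx
          exact ⟨closure (T P), ⟨P, hPm, rfl⟩, hxP⟩
  · rintro S ⟨P, hPm, rfl⟩
    obtain ⟨p₀, hp₀P, -⟩ := (hPieces P hPm).2.2.2.2
    refine ⟨isClosed_closure, ⟨p₀, subset_closure (Or.inl hp₀P)⟩,
      closure_mono (hTsubW P hPm), (hTpre P hPm).closure, ?_⟩
    refine (EMetric.diam_closure _).le.trans ?_
    exact hTdiam P hPm


lemma pieceNhd {F' : Set X}
    (hpropS : ∀ n : ℕ, ∃ 𝒮 : Set (Set X), 𝒮.Finite ∧ F' ⊆ ⋃₀ 𝒮 ∧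
        ∀ S ∈ 𝒮, IsClosed S ∧ S.Nonempty ∧ S ⊆ F' ∧ IsPreconnected S ∧
          EMetric.diam S ≤ 3 * (2⁻¹:ℝ≥0∞) ^ n)
    {p : X} (hp : p ∈ F') (n : ℕ) :
    ∃ δ : ℝ≥0∞, 0 < δ ∧ ∀ q ∈ F', edist p q < δ →
      ∃ S, S ⊆ F' ∧ IsPreconnected S ∧ p ∈ S ∧ q ∈ S ∧
        EMetric.diam S ≤ 3 * (2⁻¹:ℝ≥0∞) ^ n := by
  obtain ⟨𝒮, hfin, hcov, hS⟩ := hpropS n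
  have hbadfin : {S | S ∈ 𝒮 ∧ p ∉ S}.Finite := hfin.subset (fun S h => h.1)
  have hpos : ∀ S ∈ {S | S ∈ 𝒮 ∧ p ∉ S}, 0 < EMetric.infEdist p S := by
    rintro S ⟨hSm, hpS⟩
    exact EMetric.infEdist_pos_iff_notMem_closure.2
      (fun h => hpS ((hS S hSm).1.closure_subset h))
  obtain ⟨δ, hδ0, hδ⟩ := finite_pos_min hbadfin (fun S => EMetric.infEdist p S) hpos
  refine ⟨δ, hδ0, fun q hq hqd => ?_⟩
  obtain ⟨S₀, hS₀m, hqS₀⟩ := hcov hq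
  by_cases hpS₀ : p ∈ S₀
  · exact ⟨S₀, (hS S₀ hS₀m).2.2.1, (hS S₀ hS₀m).2.2.2.1, hpS₀, hqS₀,
      (hS S₀ hS₀m).2.2.2.2⟩
  · exact absurd hqd (not_lt.2 ((hδ S₀ ⟨hS₀m, hpS₀⟩).trans
      (EMetric.infEdist_le_edist_of_mem hqS₀)))

theorem main [ConnectedSpace X] [LocallyCompactSpace X]
    (E U : Set X) (hEcomp : IsCompact E) (hEconn : IsConnected E)
    (hU : IsOpen U) (hEU : E ⊆ U) :
    ∃ F : Set X, IsCompact F ∧ IsConnected F ∧ LocallyConnectedSpace F ∧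
      E ⊆ F ∧ F ⊆ U ∧
      {C : Set X | ∃ x ∈ Fᶜ, C = connectedComponentIn Fᶜ x}.Finite := by
  obtain ⟨L, hLc, hEL, hLU⟩ := exists_compact_between hEcomp hU hEU
  obtain ⟨L', hL'c, hLL', hL'U⟩ := exists_compact_between hLc hU hLU
  obtain ⟨F', hF'c, hF'p, hF'ne, hEF', hF'L, hpropS⟩ :=
    exists_S_continuum hEcomp hEconn.nonempty hEconn.isPreconnected hLc hEL
  obtain ⟨a, haE⟩ := hEconn.nonempty
  have hF'closed : IsClosed F' := hF'c.isClosed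
  have hF'IL' : F' ⊆ interior L' := hF'L.trans hLL'
  have hcompl : IsOpen F'ᶜ := hF'closed.isOpen_compl
  set Esc : Set X := {x | x ∈ F'ᶜ ∧ ¬ connectedComponentIn F'ᶜ x ⊆ L'} with hEscdef
  set F : Set X := Escᶜ with hFdef
  have hccopen : ∀ x : X, IsOpen (connectedComponentIn F'ᶜ x) :=
    fun x => hcompl.connectedComponentIn
  have hcceq : ∀ x : X, ∀ y ∈ connectedComponentIn F'ᶜ x,
      connectedComponentIn F'ᶜ y = connectedComponentIn F'ᶜ x :=
    fun x y hy => (connectedComponentIn_eq hy).symm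
  have hccEsc : ∀ x ∈ Esc, connectedComponentIn F'ᶜ x ⊆ Esc := by
    intro x hx y hy
    refine ⟨connectedComponentIn_subset _ _ hy, ?_⟩
    rw [hcceq x y hy]; exact hx.2
  have hEscOpen : IsOpen Esc := by
    rw [isOpen_iff_mem_nhds]
    intro x hx
    exact Filter.mem_of_superset
      ((hccopen x).mem_nhds (mem_connectedComponentIn hx.1)) (hccEsc x hx)
  have hFclosed : IsClosed F := hEscOpen.isClosed_compl
  have hF'F : F' ⊆ F := fun x hx hxEsc => hxEsc.1 hx
  have hFL' : F ⊆ L' := by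
    intro x hx
    by_contra hxL
    exact hx ⟨fun hxF' => hxL (interior_subset (hF'IL' hxF')),
      fun hsub => hxL (hsub (mem_connectedComponentIn
        (fun hxF' => hxL (interior_subset (hF'IL' hxF')))))⟩
  have hFcomp : IsCompact F := hL'c.of_isClosed_subset hFclosed hFL'
  have hFU : F ⊆ U := hFL'.trans hL'U
  have hEF : E ⊆ F := hEF'.trans hF'F
  have haF' : a ∈ F' := hEF' haE
  -- the open part of F
  set O : Set X := F \ F' with hOdef
  have hOsub : ∀ x ∈ O, connectedComponentIn F'ᶜ x ⊆ O := by
    intro x hx y hy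
    have hxF'c : x ∈ F'ᶜ := hx.2
    have hxcc : connectedComponentIn F'ᶜ x ⊆ L' := by
      by_contra hno
      exact hx.1 ⟨hxF'c, hno⟩
    refine ⟨fun hyEsc => hyEsc.2 (by rw [hcceq x y hy]; exact hxcc),
      (connectedComponentIn_subset _ _) hy⟩
  have hOopen : IsOpen O := by
    rw [isOpen_iff_mem_nhds]
    intro x hx
    exact Filter.mem_of_superset
      ((hccopen x).mem_nhds (mem_connectedComponentIn hx.2)) (hOsub x hx)
  have hOF : O ⊆ F := fun x hx => hx.1
  have hFsplit : ∀ x ∈ F, x ∉ O → x ∈ F' := by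
    intro x hx hxO
    by_contra hxF'
    exact hxO ⟨hx, hxF'⟩
  -- absorption: closure points of a component outside F' are in the component
  have habsorb : ∀ x ∈ F'ᶜ, ∀ z, z ∈ closure (connectedComponentIn F'ᶜ x) →
      z ∉ F' → z ∈ connectedComponentIn F'ᶜ x := by
    intro x hx z hz hzF'
    obtain ⟨w, hw⟩ := mem_closure_iff.1 hz (connectedComponentIn F'ᶜ z)
      (hccopen z) (mem_connectedComponentIn hzF')
    have h1 : connectedComponentIn F'ᶜ w = connectedComponentIn F'ᶜ z := hcceq z w hw.1
    have h2 : connectedComponentIn F'ᶜ w = connectedComponentIn F'ᶜ x := hcceq x w hw.2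
    rw [← h2, h1]
    exact mem_connectedComponentIn hzF'
  have hbd : ∀ x ∈ F'ᶜ, ∃ z ∈ F', z ∈ closure (connectedComponentIn F'ᶜ x) := by
    intro x hx
    by_contra hno
    push_neg at hno
    have hclsub : closure (connectedComponentIn F'ᶜ x) ⊆ connectedComponentIn F'ᶜ x := by
      intro z hz
      by_cases hzF' : z ∈ F'
      · exact absurd hz (hno z hzF')
      · exact habsorb x hx z hz hzF'
    have hclopen : IsClopen (connectedComponentIn F'ᶜ x) :=
      ⟨isClosed_of_closure_subset hclsub, hccopen x⟩
    rcases isClopen_iff.1 hclopen with h | h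
    · exact (h ▸ mem_connectedComponentIn hx : (x : X) ∈ (∅ : Set X))
    · have haC : a ∈ connectedComponentIn F'ᶜ x := h ▸ mem_univ a
      exact (connectedComponentIn_subset F'ᶜ x haC) haF'
  -- connectedness of F
  have hFpre : IsPreconnected F := by
    have he : F = ⋃₀ (insert F'
        {S | ∃ x ∈ O, S = F' ∪ closure (connectedComponentIn F'ᶜ x)}) := by
      apply Subset.antisymm
      · intro x hx
        by_cases hxO : x ∈ O
        · exact ⟨F' ∪ closure (connectedComponentIn F'ᶜ x), Or.inr ⟨x, hxO, rfl⟩,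
            Or.inr (subset_closure (mem_connectedComponentIn hxO.2))⟩
        · exact ⟨F', Or.inl rfl, hFsplit x hx hxO⟩
      · apply sUnion_subset
        rintro S (hS | ⟨x, hxO, hS⟩) <;> rw [hS]
        · exact hF'F
        · refine union_subset hF'F ?_
          exact (IsClosed.closure_subset_iff hFclosed).2 ((hOsub x hxO).trans hOF)
    rw [he]
    apply isPreconnected_sUnion a
    · rintro S (hS | ⟨x, hxO, hS⟩) <;> rw [hS]
      · exact haF'
      · exact Or.inl haF'
    · rintro S (hS | ⟨x, hxO, hS⟩) <;> rw [hS]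
      · exact hF'p
      · obtain ⟨z, hzF', hzcl⟩ := hbd x hxO.2
        exact hF'p.union' ⟨z, hzF', hzcl⟩ isPreconnected_connectedComponentIn.closure
  -- finiteness of the complementary components
  have hEsccc : ∀ x ∈ Esc, connectedComponentIn Esc x = connectedComponentIn F'ᶜ x := by
    intro x hx
    apply Subset.antisymm
    · exact isPreconnected_connectedComponentIn.subset_connectedComponentIn
        (mem_connectedComponentIn hx)
        ((connectedComponentIn_subset _ _).trans (fun y hy => hy.1))
    · exact isPreconnected_connectedComponentIn.subset_connectedComponentIn
        (mem_connectedComponentIn hx.1) (hccEsc x hx)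
  have hKb : IsCompact (L' \ interior L') := hL'c.of_isClosed_subset
      (hL'c.isClosed.sdiff isOpen_interior) diff_subset
  have hKbF'c : ∀ z ∈ L' \ interior L', z ∈ F'ᶜ := fun z hz hzF' => hz.2 (hF'IL' hzF')
  obtain ⟨t, ht⟩ := hKb.elim_finite_subcover
      (fun z : (L' \ interior L' : Set X) => connectedComponentIn F'ᶜ (z : X))
      (fun z => hccopen _)
      (fun z hz => mem_iUnion.2 ⟨⟨z, hz⟩, mem_connectedComponentIn (hKbF'c z hz)⟩)
  have hfin : {C : Set X | ∃ x ∈ Fᶜ, C = connectedComponentIn Fᶜ x}.Finite := by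
    have hFc : Fᶜ = Esc := compl_compl Esc
    apply Set.Finite.subset (Set.Finite.image
      (fun z : (L' \ interior L' : Set X) => connectedComponentIn F'ᶜ (z : X))
      t.finite_toSet)
    rintro C ⟨x, hxFc, rfl⟩
    have hxEsc : x ∈ Esc := by rwa [hFc] at hxFc
    have hxF'c : x ∈ F'ᶜ := hxEsc.1
    obtain ⟨z, hzF', hzcl⟩ := hbd x hxF'c
    obtain ⟨b, hbC, hbL'⟩ := not_subset.1 hxEsc.2
    have hw : (closure (connectedComponentIn F'ᶜ x) ∩ (L' \ interior L')).Nonempty := by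
      by_contra hno
      rw [not_nonempty_iff_eq_empty] at hno
      have hsub2 : closure (connectedComponentIn F'ᶜ x) ⊆ interior L' ∪ (L')ᶜ := by
        intro w hwcl
        by_cases hwL' : w ∈ L'
        · left
          by_contra hwint
          exact (eq_empty_iff_forall_notMem.1 hno w) (mem_inter hwcl ⟨hwL', hwint⟩)
        · exact Or.inr hwL'
      obtain ⟨w, hwS, hwu, hwv⟩ := isPreconnected_connectedComponentIn.closure
        (interior L') (L')ᶜ isOpen_interior (isOpen_compl_iff.2 hL'c.isClosed) hsub2
        ⟨z, hzcl, hF'IL' hzF'⟩ ⟨b, subset_closure hbC, hbL'⟩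
      exact hwv (interior_subset hwu)
    obtain ⟨w, hwcl, hwKb⟩ := hw
    have hwC : w ∈ connectedComponentIn F'ᶜ x := habsorb x hxF'c w hwcl
      (fun hwF' => hwKb.2 (hF'IL' hwF'))
    obtain ⟨i, hit, hwi⟩ := mem_iUnion₂.1 (ht hwKb)
    refine ⟨i, hit, ?_⟩
    rw [hFc, hEsccc x hxEsc, ← hcceq x w hwC, hcceq (i:X) w hwi]
  -- local connectedness of F
  have hlc : LocallyConnectedSpace F := by
    rw [locallyConnectedSpace_iff_connected_subsets]
    rintro ⟨p, hpF⟩ V hV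
    obtain ⟨u, hu, huV⟩ := (mem_nhds_subtype F ⟨p, hpF⟩ V).1 hV
    obtain ⟨ε₀, hε₀0, hε₀u⟩ := EMetric.nhds_basis_eball.mem_iff.1 hu
    set ε : ℝ≥0∞ := min ε₀ 1 with hεdef
    have hε0 : 0 < ε := lt_min hε₀0 one_pos
    have hεtop : ε ≠ ⊤ := ne_top_of_le_ne_top ENNReal.one_ne_top (min_le_right _ _)
    have hεu : EMetric.ball p ε ⊆ u := (EMetric.ball_subset_ball (min_le_left _ _)).trans hε₀u
    by_cases hpF' : p ∈ F'
    · -- boundary-ish case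
      obtain ⟨n, hn⟩ := ENNReal.exists_inv_two_pow_lt
        (ENNReal.div_pos hε0.ne' (by norm_num : (6:ℝ≥0∞) ≠ ⊤)).ne'
      set rn : ℝ≥0∞ := (2⁻¹:ℝ≥0∞) ^ n with hrndef
      have h5rn : 5 * rn < ε := by
        calc 5 * rn ≤ 6 * rn := by
              exact mul_le_mul_left (by norm_num) rn
          _ < 6 * (ε / 6) := by
              exact ENNReal.mul_lt_mul_right (by norm_num : (6:ℝ≥0∞) ≠ 0) (by norm_num : (6:ℝ≥0∞) ≠ ⊤) hn
          _ ≤ ε := ENNReal.mul_div_le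
      obtain ⟨δ, hδ0, hδ⟩ := pieceNhd hpropS hpF' n
      set δ' : ℝ≥0∞ := min δ rn with hδ'def
      have hδ'0 : 0 < δ' := lt_min hδ0 (ENNReal.pow_pos (by simp) n)
      set R : Set X := connectedComponentIn (EMetric.ball p δ') p with hRdef
      have hRopen : IsOpen R := EMetric.isOpen_ball.connectedComponentIn
      have hpR : p ∈ R := mem_connectedComponentIn (EMetric.mem_ball_self hδ'0)
      have hRball : R ⊆ EMetric.ball p δ' := connectedComponentIn_subset _ _
      have hRpre : IsPreconnected R := isPreconnected_connectedComponentIn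
      set 𝒩 : Set (Set X) := {S | S ⊆ F ∧ IsPreconnected S ∧ p ∈ S ∧
        EMetric.diam S ≤ 5 * rn} with h𝒩def
      set N : Set X := ⋃₀ 𝒩 with hNdef
      have hNF : N ⊆ F := sUnion_subset fun S hS => hS.1
      have hNpre : IsPreconnected N := by
        apply isPreconnected_sUnion p
        · exact fun S hS => hS.2.2.1
        · exact fun S hS => hS.2.1
      have hNball : N ⊆ EMetric.ball p ε := by
        rintro q ⟨S, hS, hqS⟩
        have : edist q p ≤ 5 * rn :=
          (EMetric.edist_le_diam_of_mem hqS hS.2.2.1).trans hS.2.2.2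
        exact EMetric.mem_ball.2 (lt_of_le_of_lt this h5rn)
      have hkey : F ∩ R ⊆ N := by
        rintro q ⟨hqF, hqR⟩
        have hqd : edist p q < δ := by
          rw [edist_comm]
          exact lt_of_lt_of_le (EMetric.mem_ball.1 (hRball hqR)) (min_le_left _ _)
        by_cases hqF' : q ∈ F'
        · obtain ⟨S, hSF', hSp, hpS, hqS, hSd⟩ := hδ q hqF' hqd
          exact ⟨S, ⟨hSF'.trans hF'F, hSp, hpS, hSd.trans (by
            apply mul_le_mul_left ; norm_num)⟩, hqS⟩
        · -- q in the open part
          have hqO : q ∈ O := ⟨hqF, hqF'⟩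
          set Q : Set X := connectedComponentIn (O ∩ R) q with hQdef
          have hQopen : IsOpen Q := (hOopen.inter hRopen).connectedComponentIn
          have hqQ : q ∈ Q := mem_connectedComponentIn ⟨hqO, hqR⟩
          have hQsub : Q ⊆ O ∩ R := connectedComponentIn_subset _ _
          -- find a boundary point of Q inside R
          have hz : ∃ z ∈ R, z ∈ closure Q ∧ z ∉ Q := by
            by_contra hcon
            push_neg at hcon
            have hsplit : R ⊆ Q ∪ (closure Q)ᶜ := by
              intro w hw
              by_cases hwcl : w ∈ closure Q
              · exact Or.inl (hcon w hw hwcl)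
              · exact Or.inr hwcl
            have hpnot : p ∉ closure Q := by
              intro hpcl
              exact (hQsub (hcon p hpR hpcl)).1.2 hpF'
            obtain ⟨w, hwR, hwu, hwv⟩ := hRpre Q (closure Q)ᶜ hQopen
              (isOpen_compl_iff.2 isClosed_closure) hsplit
              ⟨q, hqR, hqQ⟩ ⟨p, hpR, hpnot⟩
            exact hwv (subset_closure hwu)
          obtain ⟨z, hzR, hzcl, hzQ⟩ := hz
          have hzO : z ∉ O := by
            intro hzO
            obtain ⟨w, hw1, hw2⟩ := mem_closure_iff.1 hzcl
              (connectedComponentIn (O ∩ R) z)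
              ((hOopen.inter hRopen).connectedComponentIn)
              (mem_connectedComponentIn ⟨hzO, hzR⟩)
            have e1 : connectedComponentIn (O ∩ R) w = connectedComponentIn (O ∩ R) z :=
              (connectedComponentIn_eq hw1).symm
            have e2 : connectedComponentIn (O ∩ R) w = Q :=
              (connectedComponentIn_eq hw2).symm
            refine hzQ ?_
            rw [← e2, e1]
            exact mem_connectedComponentIn ⟨hzO, hzR⟩
          have hzF : z ∈ F := (IsClosed.closure_subset_iff hFclosed).2
            (hQsub.trans (fun y hy => hOF hy.1)) hzcl
          have hzF' : z ∈ F' := hFsplit z hzF hzO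
          have hzd : edist p z < δ := by
            rw [edist_comm]
            exact lt_of_lt_of_le (EMetric.mem_ball.1 (hRball hzR)) (min_le_left _ _)
          obtain ⟨S, hSF', hSp, hpS, hzS, hSd⟩ := hδ z hzF' hzd
          refine ⟨closure Q ∪ S, ⟨?_, ?_, Or.inr hpS, ?_⟩, Or.inl (subset_closure hqQ)⟩
          · refine union_subset ?_ (hSF'.trans hF'F)
            exact (IsClosed.closure_subset_iff hFclosed).2
              (hQsub.trans (fun y hy => hOF hy.1))
          · exact (isPreconnected_connectedComponentIn.closure).union' ⟨z, hzcl, hzS⟩ hSp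
          · calc EMetric.diam (closure Q ∪ S)
                ≤ EMetric.diam (closure Q) + EMetric.diam S :=
                  EMetric.diam_union' ⟨z, hzcl, hzS⟩
              _ ≤ 2 * δ' + 3 * rn := by
                  refine add_le_add ?_ hSd
                  refine (EMetric.diam_closure _).le.trans ?_
                  calc EMetric.diam Q ≤ EMetric.diam (EMetric.ball p δ') :=
                        EMetric.diam_mono (hQsub.trans (fun y hy => hRball hy.2))
                    _ ≤ 2 * δ' := EMetric.diam_ball
              _ ≤ 2 * rn + 3 * rn := by
                  exact add_le_add (mul_le_mul_right (min_le_right _ _) 2) le_rfl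
              _ = 5 * rn := by ring
      refine ⟨Subtype.val ⁻¹' N, ?_, ?_, ?_⟩
      · refine Filter.mem_of_superset ((mem_nhds_subtype F ⟨p, hpF⟩ _).2
          ⟨R, hRopen.mem_nhds hpR, subset_rfl⟩) ?_
        rintro ⟨y, hyF⟩ hy
        exact hkey ⟨hyF, hy⟩
      · have himg : Subtype.val '' (Subtype.val ⁻¹' N : Set F) = N := by
          rw [Subtype.image_preimage_coe, inter_eq_self_of_subset_right hNF]
        exact IsInducing.subtypeVal.isPreconnected_image.1 (by rw [himg]; exact hNpre)
      · refine subset_trans ?_ huV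
        intro y hy
        exact hεu (hNball hy)
    · -- interior case
      have hpO : p ∈ O := ⟨hpF, hpF'⟩
      set N : Set X := connectedComponentIn (O ∩ EMetric.ball p ε) p with hNdef
      have hNopen : IsOpen N := (hOopen.inter EMetric.isOpen_ball).connectedComponentIn
      have hpN : p ∈ N := mem_connectedComponentIn ⟨hpO, EMetric.mem_ball_self hε0⟩
      have hNsub : N ⊆ O ∩ EMetric.ball p ε := connectedComponentIn_subset _ _
      have hNF : N ⊆ F := fun y hy => hOF (hNsub hy).1
      refine ⟨Subtype.val ⁻¹' N, ?_, ?_, ?_⟩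
      · exact (mem_nhds_subtype F ⟨p, hpF⟩ _).2 ⟨N, hNopen.mem_nhds hpN, subset_rfl⟩
      · have himg : Subtype.val '' (Subtype.val ⁻¹' N : Set F) = N := by
          rw [Subtype.image_preimage_coe, inter_eq_self_of_subset_right hNF]
        exact IsInducing.subtypeVal.isPreconnected_image.1
          (by rw [himg]; exact isPreconnected_connectedComponentIn)
      · refine subset_trans ?_ huV
        intro y hy
        exact hεu (hNsub hy).2
  exact ⟨F, hFcomp, ⟨⟨a, hEF haE⟩, hFpre⟩, hlc, hEF, hFU, hfin⟩

end
end Stmt0Aux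

/-- In a connected, locally connected, locally compact, second-countable
metrizable space `X`, every continuum `E` contained in an open set `U` is contained in a
locally connected continuum `F ⊆ U` whose complement has finitely many connected components. -/
theorem stmt0 {X : Type*} [TopologicalSpace X] [ConnectedSpace X]
    [LocallyConnectedSpace X] [LocallyCompactSpace X] [SecondCountableTopology X]
    [TopologicalSpace.MetrizableSpace X]
    (E U : Set X) (hEcomp : IsCompact E) (hEconn : IsConnected E)
    (hU : IsOpen U) (hEU : E ⊆ U) :
    ∃ F : Set X, IsCompact F ∧ IsConnected F ∧ LocallyConnectedSpace F ∧
      E ⊆ F ∧ F ⊆ U ∧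
      {C : Set X | ∃ x ∈ Fᶜ, C = connectedComponentIn Fᶜ x}.Finite := by
  letI : MetricSpace X := TopologicalSpace.metrizableSpaceMetric X
  exact Stmt0Aux.main E U hEcomp hEconn hU hEU
end

section
/- Let X be a Hausdorff topological space, Y a topological space, and f : X → Y a function whose graph G = {(x, f x) : x ∈ X} is closed in X × Y. Let D(f) denote the set of points of X at which f is not continuous. Suppose E ⊆ G is compact and U ⊆ G is relatively open in G (i.e., open in the subspace topology of G) with U ⊆ E. Then U ∩ {(x, f x) : x ∈ D(f)} = U ∩ {(x, f x) : x ∈ frontier (π(E))}, where π : X × Y → X is the first-coordinate projection and frontier denotes the topological boundary in X. -/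
open Set Topology

/-- For `f : X → Y` with closed graph (`X` Hausdorff), `E` compact in the graph,
`U` relatively open in the graph with `U ⊆ E`, we have
`U ∩ graph(f|D(f)) = U ∩ graph(f|frontier (π E))`. -/
theorem stmt1 {X Y : Type*} [TopologicalSpace X] [TopologicalSpace Y] [T2Space X]
    (f : X → Y)
    (hclosed : IsClosed (Set.range fun x => (x, f x)))
    (E U : Set (X × Y))
    (hEcomp : IsCompact E) (hEG : E ⊆ Set.range fun x => (x, f x))
    (hUrelopen : ∃ V : Set (X × Y), IsOpen V ∧ U = V ∩ Set.range fun x => (x, f x))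
    (hUE : U ⊆ E) :
    U ∩ ((fun x => (x, f x)) '' {x | ¬ ContinuousAt f x}) =
      U ∩ ((fun x => (x, f x)) '' frontier (Prod.fst '' E)) := by
  obtain ⟨V, hVopen, hUV⟩ := hUrelopen
  set K : Set X := Prod.fst '' E with hK
  -- every point of K has its graph point in E
  have hgraphK : ∀ x ∈ K, (x, f x) ∈ E := by
    rintro x ⟨⟨a, b⟩, hab, rfl⟩
    obtain ⟨c, hc⟩ := hEG hab
    simp only [Prod.mk.injEq] at hc
    obtain ⟨rfl, rfl⟩ := hc
    exact hab
  -- f is continuous on K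
  have hcontK : ContinuousOn f K := by
    have : CompactSpace E := isCompact_iff_compactSpace.mp hEcomp
    let e : E ≃ K :=
      { toFun := fun p => ⟨(p : X × Y).1, ⟨p, p.2, rfl⟩⟩
        invFun := fun x => ⟨((x : X), f x), hgraphK x x.2⟩
        left_inv := by
          rintro ⟨p, hp⟩
          obtain ⟨c, hc⟩ := hEG hp
          simp only [Subtype.mk.injEq]
          rw [← hc]
        right_inv := by rintro ⟨x, hx⟩; rfl }
    have hce : Continuous e := by
      apply Continuous.subtype_mk
      exact continuous_fst.comp continuous_subtype_val
    let h : E ≃ₜ K := Continuous.homeoOfEquivCompactToT2 (f := e) hce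
    rw [continuousOn_iff_continuous_restrict]
    have : K.domRestrict f = fun x : K => ((h.symm x : X × Y).2) := by
      funext x
      rfl
    rw [this]
    exact continuous_snd.comp (continuous_subtype_val.comp h.symm.continuous)
  -- if f is continuous at x and (x, f x) ∈ U, then x ∈ interior K
  have hint : ∀ x : X, (x, f x) ∈ U → ContinuousAt f x → x ∈ interior K := by
    intro x hxU hc
    rw [mem_interior_iff_mem_nhds]
    have hgc : ContinuousAt (fun x => (x, f x)) x := continuousAt_id.prodMk hc
    have hVn : V ∈ 𝓝 (x, f x) := hVopen.mem_nhds (by rw [hUV] at hxU; exact hxU.1)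
    have hWn : (fun x => (x, f x)) ⁻¹' V ∈ 𝓝 x := hgc.preimage_mem_nhds hVn
    refine Filter.mem_of_superset hWn ?_
    intro x' hx'
    have : (x', f x') ∈ U := by rw [hUV]; exact ⟨hx', ⟨x', rfl⟩⟩
    exact ⟨(x', f x'), hUE this, rfl⟩
  ext p
  constructor
  · rintro ⟨hpU, x, hx, rfl⟩
    refine ⟨hpU, x, ?_, rfl⟩
    have hxK : x ∈ K := ⟨(x, f x), hUE hpU, rfl⟩
    refine ⟨subset_closure hxK, fun hxi => hx ?_⟩
    exact hcontK.continuousAt (mem_interior_iff_mem_nhds.mp hxi)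
  · rintro ⟨hpU, x, hx, rfl⟩
    refine ⟨hpU, x, fun hc => hx.2 (hint x hpU hc), rfl⟩
end

section
/- Let X be a Hausdorff topological space, Y a topological space, and f : X → Y a function whose graph G = {(x, f x) : x ∈ X} is closed in X × Y. Suppose E ⊆ G is compact and U ⊆ G is relatively open in G with U ⊆ E, and let π : X × Y → X be the first-coordinate projection. If x ∈ X is a point of discontinuity of f with (x, f x) ∈ U, and (x_n) is a net in X \ π(E) converging to x, then the net (f(x_n)) has no cluster point in Y (equivalently, no convergent subnet). -/
open Set Topology Filter

/-- For `f : X → Y` with closed graph (`X` Hausdorff), `E` compact in the graph,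
`U` relatively open in the graph with `U ⊆ E`: if `x` is a discontinuity point of `f` with
`(x, f x) ∈ U` and `(u i)` is a net in `X \ π(E)` converging to `x`, then the net `(f (u i))`
has no cluster point in `Y`. -/
theorem stmt2 {X Y : Type*} [TopologicalSpace X] [TopologicalSpace Y] [T2Space X]
    (f : X → Y)
    (hclosed : IsClosed (Set.range fun x => (x, f x)))
    (E U : Set (X × Y))
    (hEcomp : IsCompact E) (hEG : E ⊆ Set.range fun x => (x, f x))
    (hUrelopen : ∃ V : Set (X × Y), IsOpen V ∧ U = V ∩ Set.range fun x => (x, f x))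
    (hUE : U ⊆ E)
    (x : X) (hx : ¬ ContinuousAt f x) (hxU : (x, f x) ∈ U)
    {ι : Type*} (l : Filter ι) [l.NeBot] (u : ι → X)
    (hu : ∀ i, u i ∉ Prod.fst '' E) (hconv : Tendsto u l (𝓝 x)) :
    ∀ y : Y, ¬ MapClusterPt y l (f ∘ u) := by
  intro y hy
  set g : ι → X × Y := fun i => (u i, f (u i)) with hg
  -- (x, y) is a cluster point of the net g = (u, f ∘ u)
  have hle : map g l ≤ comap Prod.fst (𝓝 x) := by
    rw [← map_le_iff_le_comap, map_map]
    exact hconv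
  have hne : (map g l ⊓ 𝓝 (x, y)).NeBot := by
    have heq : map g l ⊓ 𝓝 (x, y) = map g l ⊓ comap Prod.snd (𝓝 y) := by
      rw [nhds_prod_eq, prod_eq_inf, ← inf_assoc, inf_of_le_left hle]
    rw [heq]
    have hpush : map Prod.snd (map g l ⊓ comap Prod.snd (𝓝 y)) = map (f ∘ u) l ⊓ 𝓝 y := by
      rw [Filter.push_pull, map_map]
      rfl
    have hnb : (map (f ∘ u) l ⊓ 𝓝 y).NeBot := by
      rw [MapClusterPt, ClusterPt, inf_comm] at hy; exact hy
    rw [← hpush] at hnb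
    exact hnb.of_map
  have hcl : MapClusterPt (x, y) l g := by
    rw [MapClusterPt, ClusterPt, inf_comm]; exact hne
  -- since the graph is closed, (x, y) lies on the graph, so y = f x
  have hgr : map g l ≤ 𝓟 (Set.range fun x => (x, f x)) :=
    le_principal_iff.mpr (mem_map.mpr (univ_mem' fun i => ⟨u i, rfl⟩))
  have hmem : (x, y) ∈ Set.range fun x => (x, f x) :=
    isClosed_iff_clusterPt.mp hclosed _ (hcl.clusterPt.mono hgr)
  obtain ⟨a, ha⟩ := hmem
  have hax : a = x := congrArg Prod.fst ha
  have hyfx : y = f x := by rw [← hax]; exact (congrArg Prod.snd ha).symm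
  -- U is relatively open and contains (x, y), so the net is frequently in U ⊆ E
  obtain ⟨V, hVopen, hUV⟩ := hUrelopen
  have hxyU : (x, y) ∈ U := by rw [hyfx]; exact hxU
  have hV : V ∈ 𝓝 (x, y) := hVopen.mem_nhds (by rw [hUV] at hxyU; exact hxyU.1)
  have hfreq : ∃ᶠ i in l, g i ∈ V := (mapClusterPt_iff_frequently.mp hcl) V hV
  obtain ⟨i, hi⟩ := hfreq.exists
  have hiU : g i ∈ U := by rw [hUV]; exact ⟨hi, ⟨u i, rfl⟩⟩
  exact hu i ⟨g i, hUE hiU, rfl⟩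
end

section
/- Let X be a connected, locally connected, locally compact, second-countable metrizable space, and let Y be a locally compact, second-countable metrizable space. Let f : X → Y be a function whose graph G = {(x, f x) : x ∈ X} is closed in X × Y, connected, and locally connected (as a subspace of X × Y). Let D(f) be the set of discontinuity points of f and π : X × Y → X the projection. Then for every x ∈ D(f) there exist a set U ⊆ G, relatively open in G, and a set E ⊆ G such that: (1) (x, f x) ∈ U ⊆ E ⊆ G, E is a continuum and E is locally connected as a subspace; (2) U ∩ {(z, f z) : z ∈ D(f)} = U ∩ {(z, f z) : z ∈ frontier(π(E))} (in particular x ∈ frontier(π(E))); (3) for every sequence (x_n) in X \ π(E) with x_n → x, the sequence (f(x_n)) has no cluster point in Y; and (4) X \ π(E) has only finitely many connected components. -/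
open Set Topology Filter Metric

section Aux
variable {Z : Type*} [MetricSpace Z]



/-- Small connected open neighbourhoods with compact closure. -/
lemma exists_good_nbhd [LocallyCompactSpace Z] [LocallyConnectedSpace Z] (z : Z) {W : Set Z}
    (hW : IsOpen W) (hzW : z ∈ W) :
    ∃ O : Set Z, IsOpen O ∧ IsPreconnected O ∧ z ∈ O ∧ O ⊆ W ∧ IsCompact (closure O) := by
  obtain ⟨K, hKc, hK⟩ := exists_compact_mem_nhds z
  obtain ⟨O, hOsub, hOopen, hzO, hOconn⟩ :=
    locallyConnectedSpace_iff_subsets_isOpen_isConnected.mp ‹LocallyConnectedSpace Z› z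
      (W ∩ interior K)
      ((hW.inter isOpen_interior).mem_nhds ⟨hzW, mem_interior_iff_mem_nhds.mpr hK⟩)
  refine ⟨O, hOopen, hOconn.isPreconnected, hzO, fun y hy => (hOsub hy).1, ?_⟩
  exact hKc.of_isClosed_subset isClosed_closure
    ((closure_mono (fun y hy => (hOsub hy).2)).trans
      ((closure_mono interior_subset).trans (by rw [hKc.isClosed.closure_eq])))

/-- Property S style covering property. -/
def CoverProp (M : Set Z) : Prop :=
  ∀ ε : ℝ, 0 < ε → ∃ 𝒯 : Set (Set Z), 𝒯.Finite ∧ M = ⋃₀ 𝒯 ∧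
    ∀ T ∈ 𝒯, IsClosed T ∧ IsPreconnected T ∧ ∃ z, T ⊆ Metric.ball z ε

/-- Crossing the frontier. -/
lemma preconn_frontier {S B : Set Z} (hS : IsPreconnected S) (h1 : (S ∩ B).Nonempty)
    (h2 : (S \ B).Nonempty) : (S ∩ frontier B).Nonempty := by
  by_contra h
  rw [not_nonempty_iff_eq_empty] at h
  have hsub : S ⊆ interior B ∪ (closure B)ᶜ := by
    intro y hy
    by_cases hyB : y ∈ closure B
    · left
      rcases (em (y ∈ interior B)) with h'|h'
      · exact h'
      · exfalso
        have : y ∈ S ∩ frontier B := ⟨hy, hyB, h'⟩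
        simp [h] at this
    · exact Or.inr hyB
  obtain ⟨y, hyS, hyB⟩ := h1
  obtain ⟨w, hwS, hwB⟩ := h2
  have h1' : (S ∩ interior B).Nonempty := by
    refine ⟨y, hyS, ?_⟩
    rcases hsub hyS with h'|h'
    · exact h'
    · exact absurd (subset_closure hyB) h'
  have h2' : (S ∩ (closure B)ᶜ).Nonempty := by
    refine ⟨w, hwS, ?_⟩
    rcases hsub hwS with h'|h'
    · exact absurd (interior_subset h') hwB
    · exact h'
  obtain ⟨v, hvS, hv1, hv2⟩ :=
    hS (interior B) (closure B)ᶜ isOpen_interior isClosed_closure.isOpen_compl hsub h1' h2'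
  exact hv2 (subset_closure (interior_subset hv1))

/-- Closure of a connected component of the complement of a closed set. -/
lemma closure_cCI [LocallyConnectedSpace Z] {A : Set Z} (hA : IsClosed A) {g : Z} :
    closure (connectedComponentIn Aᶜ g) ⊆ connectedComponentIn Aᶜ g ∪ A := by
  intro z hz
  by_cases hzA : z ∈ A
  · exact Or.inr hzA
  left
  have hN : IsOpen (connectedComponentIn Aᶜ z) := hA.isOpen_compl.connectedComponentIn
  have hzN : z ∈ connectedComponentIn Aᶜ z := mem_connectedComponentIn hzA
  obtain ⟨y, hy1, hy2⟩ := mem_closure_iff.mp hz _ hN hzN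
  rw [connectedComponentIn_eq hy2, ← connectedComponentIn_eq hy1]
  exact hzN

/-- In a connected space, a component of the complement of a nonempty closed set has closure
meeting the set. -/
lemma cCI_meets [LocallyConnectedSpace Z] [ConnectedSpace Z] {A : Set Z} (hA : IsClosed A)
    (hAne : A.Nonempty) {g : Z} (hg : g ∈ Aᶜ) :
    (closure (connectedComponentIn Aᶜ g) ∩ A).Nonempty := by
  by_contra h
  rw [not_nonempty_iff_eq_empty] at h
  have hclosed : IsClosed (connectedComponentIn Aᶜ g) := by
    have : closure (connectedComponentIn Aᶜ g) ⊆ connectedComponentIn Aᶜ g := by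
      intro z hz
      rcases closure_cCI hA hz with h'|h'
      · exact h'
      · exfalso
        have : z ∈ closure (connectedComponentIn Aᶜ g) ∩ A := ⟨hz, h'⟩
        simp [h] at this
    exact isClosed_of_closure_subset this
  have hopen : IsOpen (connectedComponentIn Aᶜ g) := hA.isOpen_compl.connectedComponentIn
  have huniv := (isClopen_iff.mp ⟨hclosed, hopen⟩).resolve_left
    (Set.Nonempty.ne_empty ⟨g, mem_connectedComponentIn hg⟩)
  obtain ⟨a, ha⟩ := hAne
  have : a ∈ connectedComponentIn Aᶜ g := huniv ▸ mem_univ a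
  exact (connectedComponentIn_subset Aᶜ g this) ha

lemma ends_finite [LocallyConnectedSpace Z] [ConnectedSpace Z]
    {A B : Set Z} (hA : IsCompact A) (hAne : A.Nonempty) (hB : IsCompact B)
    (hAB : A ⊆ interior B) :
    {C : Set Z | ∃ z ∈ Aᶜ, C = connectedComponentIn Aᶜ z ∧ (C ∩ Bᶜ).Nonempty}.Finite := by
  by_contra hinf
  have hinf' : {C : Set Z | ∃ z ∈ Aᶜ, C = connectedComponentIn Aᶜ z ∧ (C ∩ Bᶜ).Nonempty}.Infinite :=
    fun h => hinf h
  let e := hinf'.natEmbedding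
  have key : ∀ n : ℕ, ∃ x, x ∈ closure ((e n : Set Z)) ∧ x ∈ frontier B := by
    intro n
    obtain ⟨z, hz, hCz, hCB⟩ := (e n).2
    have hmeetsA : (closure ((e n : Set Z)) ∩ A).Nonempty := by
      rw [hCz]; exact cCI_meets hA.isClosed hAne hz
    obtain ⟨a, haC, haA⟩ := hmeetsA
    obtain ⟨w, hwC, hwB⟩ := hCB
    have hpre : IsPreconnected (closure ((e n : Set Z))) := by
      rw [hCz]; exact isPreconnected_connectedComponentIn.closure
    exact preconn_frontier hpre ⟨a, haC, interior_subset (hAB haA)⟩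
      ⟨w, subset_closure hwC, hwB⟩
  choose x hxcl hxfr using key
  have hfrB : IsCompact (frontier B) := hB.of_isClosed_subset isClosed_frontier
    (frontier_subset_closure.trans (by rw [hB.isClosed.closure_eq]))
  obtain ⟨x', hx'fr, θ, hθ, hθtend⟩ := hfrB.tendsto_subseq hxfr
  have hx'A : x' ∈ Aᶜ := fun h => hx'fr.2 (hAB h)
  have hNopen : IsOpen (connectedComponentIn Aᶜ x') :=
    hA.isClosed.isOpen_compl.connectedComponentIn
  have hx'N : x' ∈ connectedComponentIn Aᶜ x' := mem_connectedComponentIn hx'A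
  have hev : ∀ᶠ k in atTop, x (θ k) ∈ connectedComponentIn Aᶜ x' :=
    hθtend.eventually_mem (hNopen.mem_nhds hx'N)
  obtain ⟨k0, hk0⟩ := eventually_atTop.mp hev
  have comp_eq : ∀ k, x (θ k) ∈ connectedComponentIn Aᶜ x' →
      (e (θ k) : Set Z) = connectedComponentIn Aᶜ x' := by
    intro k hk
    obtain ⟨z, hz, hCz, _⟩ := (e (θ k)).2
    obtain ⟨y, hyN, hyC⟩ := mem_closure_iff.mp (hxcl (θ k)) _ hNopen hk
    calc (e (θ k) : Set Z) = connectedComponentIn Aᶜ z := hCz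
      _ = connectedComponentIn Aᶜ y := connectedComponentIn_eq (hCz ▸ hyC)
      _ = connectedComponentIn Aᶜ x' := (connectedComponentIn_eq hyN).symm
  have h1 := comp_eq k0 (hk0 k0 le_rfl)
  have h2 := comp_eq (k0+1) (hk0 (k0+1) (Nat.le_succ k0))
  have : θ k0 = θ (k0+1) := e.injective (Subtype.ext (h1.trans h2.symm))
  exact absurd this (ne_of_lt (hθ (Nat.lt_succ_self k0)))




lemma peano_nbhd [LocallyCompactSpace Z] [LocallyConnectedSpace Z] (p : Z) :
    ∃ Ω : Set Z, IsOpen Ω ∧ p ∈ Ω ∧ IsPreconnected Ω ∧ IsCompact (closure Ω) ∧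
      CoverProp (closure Ω) := by
  classical
  obtain ⟨r, hr, hrc⟩ := exists_isCompact_closedBall p
  set e : ℕ → ℝ := fun n => (r/4) * (1/2)^n with he
  have hepos : ∀ n, 0 < e n := fun n => by positivity
  have hesucc : ∀ n, e (n+1) * 2 = e n := by
    intro n; simp only [he, pow_succ]; ring
  set s : ℕ → ℝ := fun n => (r/4) * (2 - (1/2)^n) with hs
  have hssucc : ∀ n, s n + e (n+1) = s (n+1) := by
    intro n; simp only [he, hs, pow_succ]; ring
  have hsr : ∀ n, s n ≤ r/2 := by
    intro n
    have h1 : (0:ℝ) < (1/2)^n := by positivity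
    have : (2 - (1/2:ℝ)^n) ≤ 2 := by linarith
    calc (r/4) * (2 - (1/2)^n) ≤ (r/4) * 2 := by nlinarith
      _ = r/2 := by ring
  -- basic small connected neighbourhoods
  have basic : ∀ (z : Z) (ε : ℝ), 0 < ε →
      ∃ O : Set Z, IsOpen O ∧ IsPreconnected O ∧ z ∈ O ∧ O ⊆ ball z ε := by
    intro z ε hε
    obtain ⟨O, hOsub, hOopen, hzO, hOconn⟩ :=
      locallyConnectedSpace_iff_subsets_isOpen_isConnected.mp ‹LocallyConnectedSpace Z› z
        (ball z ε) (ball_mem_nhds z hε)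
    exact ⟨O, hOopen, hOconn.isPreconnected, hzO, hOsub⟩
  -- one covering step
  have step : ∀ (M : Set Z), IsCompact M → ∀ ε : ℝ, 0 < ε → ∃ fam : Set (Set Z), fam.Finite ∧
      (∀ U ∈ fam, IsOpen U ∧ IsPreconnected U ∧ ∃ z ∈ M, z ∈ U ∧ U ⊆ ball z ε) ∧
      M ⊆ ⋃₀ fam := by
    intro M hM ε hε
    have h1 : ∀ z : (M : Set Z), ∃ O : Set Z, IsOpen O ∧ IsPreconnected O ∧ (z : Z) ∈ O ∧
        O ⊆ ball (z : Z) ε := fun z => basic z ε hε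
    choose O hO1 hO2 hO3 hO4 using h1
    obtain ⟨t, ht⟩ := hM.elim_finite_subcover O hO1 (fun z hz => mem_iUnion.mpr ⟨⟨z, hz⟩, hO3 ⟨z, hz⟩⟩)
    refine ⟨O '' t, (t.finite_toSet.image O), ?_, ?_⟩
    · rintro U ⟨z, hz, rfl⟩
      exact ⟨hO1 z, hO2 z, ⟨z, z.2, hO3 z, hO4 z⟩⟩
    · intro y hy
      obtain ⟨z, hz, hyz⟩ := mem_iUnion₂.mp (ht hy)
      exact ⟨O z, ⟨z, hz, rfl⟩, hyz⟩
  -- the invariant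
  set Good : ℕ → Set (Set Z) → Prop := fun n fam => fam.Finite ∧
    (∀ U ∈ fam, IsOpen U ∧ IsPreconnected U ∧ ∃ z, z ∈ U ∧ U ⊆ ball z (e n)) ∧
    ⋃₀ fam ⊆ ball p (s n) with hGoodDef
  have hcompact : ∀ (fam : Set (Set Z)) n, Good n fam → IsCompact (closure (⋃₀ fam)) := by
    intro fam n hfam
    refine hrc.of_isClosed_subset isClosed_closure ?_
    refine (closure_mono hfam.2.2).trans ?_
    refine (closure_mono (ball_subset_ball (hsr n))).trans ?_
    exact closure_ball_subset_closedBall.trans (closedBall_subset_closedBall (by linarith))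
  -- base family
  obtain ⟨O₀, hO₀o, hO₀p, hO₀m, hO₀b⟩ := basic p (e 0) (hepos 0)
  have hfam0 : Good 0 ({O₀} : Set (Set Z)) := by
    refine ⟨finite_singleton _, ?_, ?_⟩
    · rintro U rfl2
      rcases rfl2 with rfl
      exact ⟨hO₀o, hO₀p, ⟨p, hO₀m, hO₀b⟩⟩
    · intro y hy
      rcases hy with ⟨U, hU, hyU⟩
      rcases hU with rfl
      have : s 0 = e 0 := by simp [hs, he]; norm_num
      rw [this]
      exact hO₀b hyU
  -- recursion step
  have recstep : ∀ n (fam : Set (Set Z)), Good n fam → ∃ fam', Good (n+1) fam' ∧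
      (∀ U ∈ fam', (U ∩ ⋃₀ fam).Nonempty) ∧ ⋃₀ fam ⊆ ⋃₀ fam' := by
    intro n fam hfam
    obtain ⟨fam', h1, h2, h3⟩ := step (closure (⋃₀ fam)) (hcompact fam n hfam) (e (n+1))
      (hepos (n+1))
    refine ⟨fam', ⟨h1, ?_, ?_⟩, ?_, (subset_closure.trans h3)⟩
    · intro U hU
      obtain ⟨z, hzcl, hzU, hUb⟩ := (h2 U hU).2.2
      exact ⟨(h2 U hU).1, (h2 U hU).2.1, ⟨z, hzU, hUb⟩⟩
    · intro y hy
      obtain ⟨U, hU, hyU⟩ := hy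
      obtain ⟨z, hzcl, hzU, hUb⟩ := (h2 U hU).2.2
      have hzp : dist z p ≤ s n := by
        have h5 : z ∈ closure (ball p (s n)) := closure_mono hfam.2.2 hzcl
        exact mem_closedBall.mp (closure_ball_subset_closedBall h5)
      have : dist y p < e (n+1) + s n := by
        have h4 : dist y z < e (n+1) := mem_ball.mp (hUb hyU)
        calc dist y p ≤ dist y z + dist z p := dist_triangle y z p
          _ < e (n+1) + s n := by linarith
      rw [mem_ball]
      calc dist y p < e (n+1) + s n := this
        _ = s (n+1) := by rw [← hssucc n]; ring
    · intro U hU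
      obtain ⟨z, hzcl, hzU, hUb⟩ := (h2 U hU).2.2
      obtain ⟨y, hy1, hy2⟩ := mem_closure_iff.mp hzcl U (h2 U hU).1 hzU
      exact ⟨y, hy1, hy2⟩
  -- build the sequence of families
  choose g hg1 hg2 hg3 using recstep
  let T : (n : ℕ) → {fam : Set (Set Z) // Good n fam} := fun n =>
    Nat.rec ⟨({O₀} : Set (Set Z)), hfam0⟩
      (fun n prev => ⟨g n prev.1 prev.2, hg1 n prev.1 prev.2⟩) n
  set F : ℕ → Set (Set Z) := fun n => (T n).1 with hF
  have hGoodF : ∀ n, Good n (F n) := fun n => (T n).2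
  have hlink : ∀ n, ∀ U ∈ F (n+1), (U ∩ ⋃₀ F n).Nonempty := fun n => hg2 n (F n) (T n).2
  have hmono : ∀ n, ⋃₀ F n ⊆ ⋃₀ F (n+1) := fun n => hg3 n (F n) (T n).2
  have hmono' : ∀ m n, m ≤ n → ⋃₀ F m ⊆ ⋃₀ F n := by
    intro m n hmn
    induction n with
    | zero => rw [Nat.le_zero.mp hmn]
    | succ k ih =>
      rcases Nat.lt_or_ge m (k+1) with h|h
      · exact (ih (Nat.lt_succ_iff.mp h)).trans (hmono k)
      · rw [Nat.le_antisymm hmn h]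
  set Ω : Set Z := ⋃ n, ⋃₀ F n with hΩ
  have hΩopen : IsOpen Ω :=
    isOpen_iUnion (fun n => isOpen_sUnion (fun U hU => ((hGoodF n).2.1 U hU).1))
  have hpΩ : p ∈ Ω := mem_iUnion.mpr ⟨0, ⟨O₀, rfl, hO₀m⟩⟩
  have hΩball : Ω ⊆ ball p (r/2) := by
    intro y hy
    obtain ⟨n, hn⟩ := mem_iUnion.mp hy
    exact ball_subset_ball (hsr n) ((hGoodF n).2.2 hn)
  have hclΩc : IsCompact (closure Ω) := by
    refine hrc.of_isClosed_subset isClosed_closure ?_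
    refine (closure_mono hΩball).trans (closure_ball_subset_closedBall.trans
      (closedBall_subset_closedBall (by linarith)))
  -- connectivity
  have hchain : ∀ n, ∀ U ∈ F n, ∃ t : Set Z, t ⊆ Ω ∧ p ∈ t ∧ U ⊆ t ∧ IsPreconnected t := by
    intro n
    induction n with
    | zero =>
      intro U hU
      have hU0 : U = O₀ := hU
      subst hU0
      exact ⟨U, (subset_sUnion_of_mem (hU : U ∈ F 0)).trans
        (subset_iUnion_of_subset 0 fun a ha => ha), hO₀m, subset_rfl, hO₀p⟩
    | succ k ih =>
      intro U hU
      obtain ⟨y, hyU, hyF⟩ := hlink k U hU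
      obtain ⟨U', hU', hyU'⟩ := hyF
      obtain ⟨t, ht1, ht2, ht3, ht4⟩ := ih U' hU'
      refine ⟨U ∪ t, ?_, Or.inr ht2, subset_union_left, ?_⟩
      · refine union_subset ?_ ht1
        exact (subset_sUnion_of_mem hU).trans (subset_iUnion_of_subset (k+1) fun a ha => ha)
      · exact IsPreconnected.union' ⟨y, hyU, ht3 hyU'⟩ ((hGoodF (k+1)).2.1 U hU).2.1 ht4
  have hΩpre : IsPreconnected Ω := by
    refine isPreconnected_of_forall p ?_
    intro y hy
    obtain ⟨n, hn⟩ := mem_iUnion.mp hy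
    obtain ⟨U, hU, hyU⟩ := hn
    obtain ⟨t, ht1, ht2, ht3, ht4⟩ := hchain n U hU
    exact ⟨t, ht1, ht2, ht3 hyU, ht4⟩
  refine ⟨Ω, hΩopen, hpΩ, hΩpre, hclΩc, ?_⟩
  -- the covering property
  intro ε hε
  have htend : Tendsto e atTop (𝓝 0) := by
    have h0 := tendsto_pow_atTop_nhds_zero_of_lt_one (by norm_num : (0:ℝ) ≤ 1/2)
      (by norm_num : (1/2:ℝ) < 1)
    have h1 := h0.const_mul (r/4)
    simpa [he] using h1
  obtain ⟨n, hn⟩ := (htend.eventually (gt_mem_nhds (by positivity : (0:ℝ) < ε/4))).exists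
  let Dm : Set Z → ℕ → Set Z := fun V m => Nat.rec V
    (fun m prev => prev ∪ ⋃₀ {U | U ∈ F (n + m + 1) ∧ (U ∩ prev).Nonempty}) m
  have hDmsucc : ∀ V m, Dm V (m+1) =
      Dm V m ∪ ⋃₀ {U | U ∈ F (n + m + 1) ∧ (U ∩ Dm V m).Nonempty} := fun V m => rfl
  have hDmmono : ∀ V m, Dm V m ⊆ Dm V (m+1) := fun V m => by
    rw [hDmsucc]; exact subset_union_left
  have hVDm : ∀ V m, V ⊆ Dm V m := by
    intro V m
    induction m with
    | zero => exact subset_rfl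
    | succ k ih => exact ih.trans (hDmmono V k)
  have hDmΩ : ∀ V, V ∈ F n → ∀ m, Dm V m ⊆ Ω := by
    intro V hV m
    induction m with
    | zero =>
      exact (subset_sUnion_of_mem hV).trans (subset_iUnion_of_subset n fun a ha => ha)
    | succ k ih =>
      rw [hDmsucc]
      refine union_subset ih ?_
      rintro y ⟨U, ⟨hU, _⟩, hyU⟩
      exact (subset_sUnion_of_mem hU).trans (subset_iUnion_of_subset (n+k+1) fun a ha => ha) hyU
  have hDmrad : ∀ (V : Set Z) (zV : Z), V ⊆ ball zV (e n) → ∀ m,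
      Dm V m ⊆ ball zV (3 * e n - 2 * e (n + m)) := by
    intro V zV hVb m
    induction m with
    | zero =>
      intro y hy
      have : dist y zV < e n := mem_ball.mp (hVb hy)
      rw [mem_ball]
      have : e (n + 0) = e n := by norm_num
      rw [this]; linarith [mem_ball.mp (hVb hy)]
    | succ k ih =>
      rw [hDmsucc]
      rintro y (hy|⟨U, ⟨hU, ⟨t, htU, htD⟩⟩, hyU⟩)
      · refine ball_subset_ball ?_ (ih hy)
        have h1 : 0 < e (n+k+1) := hepos _
        have h2 : e (n+k+1) * 2 = e (n+k) := hesucc _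
        have h3 : (n + (k+1)) = (n + k + 1) := by ring
        rw [h3]; linarith
      · obtain ⟨zU, hzU, hUb⟩ := ((hGoodF (n+k+1)).2.1 U hU).2.2
        have hyt : dist y t < 2 * e (n+k+1) := by
          calc dist y t ≤ dist y zU + dist zU t := dist_triangle _ _ _
            _ < e (n+k+1) + e (n+k+1) := by
                have := mem_ball.mp (hUb hyU)
                have := mem_ball.mp (hUb htU)
                rw [dist_comm zU t] at *
                linarith [mem_ball.mp (hUb hyU), mem_ball.mp (hUb htU)]
            _ = 2 * e (n+k+1) := by ring
        have htzV : dist t zV < 3 * e n - 2 * e (n + k) := mem_ball.mp (ih htD)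
        rw [mem_ball]
        have h2 : e (n+k+1) * 2 = e (n+k) := hesucc _
        have h3 : (n + (k+1)) = (n + k + 1) := by ring
        rw [h3]
        calc dist y zV ≤ dist y t + dist t zV := dist_triangle _ _ _
          _ < 2 * e (n+k+1) + (3 * e n - 2 * e (n+k)) := by linarith
          _ = 3 * e n - 2 * e (n+k+1) := by linarith
  have hDmpre : ∀ (V : Set Z) (zV : Z), zV ∈ V → IsPreconnected V → ∀ m,
      IsPreconnected (Dm V m) := by
    intro V zV hzV hVp m
    induction m with
    | zero => exact hVp
    | succ k ih =>
      rw [hDmsucc]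
      refine isPreconnected_of_forall zV ?_
      rintro y (hy|⟨U, ⟨hU, hUne⟩, hyU⟩)
      · exact ⟨Dm V k, subset_union_left, hVDm V k hzV, hy, ih⟩
      · refine ⟨U ∪ Dm V k, union_subset ?_ subset_union_left,
          Or.inr (hVDm V k hzV), Or.inl hyU,
          IsPreconnected.union' hUne ((hGoodF (n+k+1)).2.1 U hU).2.1 ih⟩
        intro a ha
        exact Or.inr ⟨U, ⟨hU, hUne⟩, ha⟩
  have hcov : ∀ m, ⋃₀ F (n + m) ⊆ ⋃ V ∈ F n, Dm V m := by
    intro m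
    induction m with
    | zero =>
      intro y hy
      obtain ⟨V, hV, hyV⟩ := hy
      exact mem_iUnion₂.mpr ⟨V, hV, hyV⟩
    | succ k ih =>
      intro y hy
      have h3 : (n + (k+1)) = (n + k + 1) := by ring
      rw [h3] at hy
      obtain ⟨U, hU, hyU⟩ := hy
      obtain ⟨t, htU, htF⟩ := hlink (n+k) U hU
      obtain ⟨V, hV, htD⟩ := mem_iUnion₂.mp (ih htF)
      refine mem_iUnion₂.mpr ⟨V, hV, ?_⟩
      rw [hDmsucc]
      exact Or.inr ⟨U, ⟨hU, ⟨t, htU, htD⟩⟩, hyU⟩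
  have hΩeq : Ω = ⋃ V ∈ F n, (⋃ m, Dm V m) := by
    apply Subset.antisymm
    · intro y hy
      obtain ⟨k, hk⟩ := mem_iUnion.mp hy
      rcases Nat.le_total k n with h|h
      · obtain ⟨V, hV, hyV⟩ := hmono' k n h hk
        exact mem_iUnion₂.mpr ⟨V, hV, mem_iUnion.mpr ⟨0, hyV⟩⟩
      · obtain ⟨m, rfl⟩ := Nat.exists_eq_add_of_le h
        obtain ⟨V, hV, hyD⟩ := mem_iUnion₂.mp (hcov m hk)
        exact mem_iUnion₂.mpr ⟨V, hV, mem_iUnion.mpr ⟨m, hyD⟩⟩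
    · refine iUnion₂_subset ?_
      intro V hV
      refine iUnion_subset ?_
      intro m
      exact hDmΩ V hV m
  refine ⟨(fun V => closure (⋃ m, Dm V m)) '' (F n), (hGoodF n).1.image _, ?_, ?_⟩
  · rw [sUnion_image, hΩeq, (hGoodF n).1.closure_biUnion]
  · rintro T ⟨V, hV, rfl⟩
    obtain ⟨zV, hzV, hVb⟩ := ((hGoodF n).2.1 V hV).2.2
    refine ⟨isClosed_closure, ?_, ⟨zV, ?_⟩⟩
    · refine IsPreconnected.closure ?_
      refine isPreconnected_of_forall zV ?_
      intro y hy
      obtain ⟨m, hm⟩ := mem_iUnion.mp hy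
      exact ⟨Dm V m, subset_iUnion _ m, hVDm V m hzV, hm,
        hDmpre V zV hzV ((hGoodF n).2.1 V hV).2.1 m⟩
    · have hsub : (⋃ m, Dm V m) ⊆ ball zV (3 * e n) := by
        refine iUnion_subset ?_
        intro m
        refine (hDmrad V zV hVb m).trans (ball_subset_ball ?_)
        have := hepos (n+m)
        linarith
      refine (closure_mono hsub).trans ?_
      refine closure_ball_subset_closedBall.trans ?_
      intro y hy
      rw [mem_closedBall] at hy
      rw [mem_ball]
      have := hepos n
      linarith




lemma ulc_of_cover {M : Set Z} (hM : IsCompact M) (hC : CoverProp M) {ε : ℝ} (hε : 0 < ε) :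
    ∃ δ : ℝ, 0 < δ ∧ ∀ a ∈ M, ∀ b ∈ M, dist a b < δ →
      ∃ A : Set Z, A ⊆ M ∧ IsPreconnected A ∧ a ∈ A ∧ b ∈ A ∧ A ⊆ ball a ε := by
  classical
  obtain ⟨𝒯, h𝒯fin, h𝒯eq, h𝒯⟩ := hC (ε/8) (by positivity)
  set N : Z → Set Z := fun q => ⋃₀ {T | T ∈ 𝒯 ∧ q ∈ T} with hN
  have hNsub : ∀ q, N q ⊆ M := by
    rintro q y ⟨T, ⟨hT, _⟩, hyT⟩
    rw [h𝒯eq]; exact ⟨T, hT, hyT⟩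
  have hNpre : ∀ q, IsPreconnected (N q) :=
    fun q => isPreconnected_sUnion q _ (fun T hT => hT.2) (fun T hT => (h𝒯 T hT.1).2.1)
  have hNball : ∀ q ∈ M, N q ⊆ ball q (ε/4) := by
    rintro q hq y ⟨T, ⟨hT, hqT⟩, hyT⟩
    obtain ⟨z, hz⟩ := (h𝒯 T hT).2.2
    have h1 := mem_ball.mp (hz hyT)
    have h2 := mem_ball.mp (hz hqT)
    rw [mem_ball]
    calc dist y q ≤ dist y z + dist z q := dist_triangle _ _ _
      _ < ε/8 + ε/8 := by rw [dist_comm z q] at *; linarith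
      _ = ε/4 := by ring
  have local_data : ∀ q ∈ M, ∃ ρ : ℝ, 0 < ρ ∧ ρ ≤ ε/4 ∧ M ∩ ball q ρ ⊆ N q := by
    intro q hq
    set B : Set Z := ⋃₀ {T | T ∈ 𝒯 ∧ q ∉ T} with hB
    have hBclosed : IsClosed B := by
      rw [hB, sUnion_eq_biUnion]
      exact (h𝒯fin.subset (fun T hT => hT.1)).isClosed_biUnion (fun T hT => (h𝒯 T hT.1).1)
    have hqB : q ∉ B := by rintro ⟨T, ⟨_, hqT⟩, hqT'⟩; exact hqT hqT'
    obtain ⟨ρ₀, hρ₀, hball⟩ := Metric.isOpen_iff.mp hBclosed.isOpen_compl q hqB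
    refine ⟨min ρ₀ (ε/4), lt_min hρ₀ (by positivity), min_le_right _ _, ?_⟩
    rintro y ⟨hyM, hyb⟩
    rw [h𝒯eq] at hyM
    obtain ⟨T, hT, hyT⟩ := hyM
    by_cases hqT : q ∈ T
    · exact ⟨T, ⟨hT, hqT⟩, hyT⟩
    · exfalso
      have : y ∈ Bᶜ := hball (ball_subset_ball (min_le_left _ _) hyb)
      exact this ⟨T, ⟨hT, hqT⟩, hyT⟩
  rcases M.eq_empty_or_nonempty with rfl|hMne
  · exact ⟨1, one_pos, by simp⟩
  choose! ρ hρpos hρle hρsub using local_data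
  have hcover : M ⊆ ⋃ q : (M : Set Z), ball (q : Z) (ρ q / 2) := by
    intro y hy
    exact mem_iUnion.mpr ⟨⟨y, hy⟩, mem_ball_self (by simpa using half_pos (hρpos y hy))⟩
  obtain ⟨t, ht⟩ := hM.elim_finite_subcover _ (fun q : (M : Set Z) => isOpen_ball) hcover
  have htne : t.Nonempty := by
    obtain ⟨y, hy⟩ := hMne
    obtain ⟨q, hq, _⟩ := mem_iUnion₂.mp (ht hy)
    exact ⟨q, hq⟩
  refine ⟨t.inf' htne (fun q => ρ (q : Z) / 2), ?_, ?_⟩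
  · rw [Finset.lt_inf'_iff]
    exact fun q hq => half_pos (hρpos q q.2)
  · intro a ha b hb hab
    obtain ⟨q, hq, haq⟩ := mem_iUnion₂.mp (ht ha)
    have hδq : t.inf' htne (fun q => ρ (q : Z) / 2) ≤ ρ (q : Z) / 2 := Finset.inf'_le _ hq
    have haq' : dist a (q : Z) < ρ (q : Z) / 2 := mem_ball.mp haq
    have hbq : dist b (q : Z) < ρ (q : Z) := by
      calc dist b (q : Z) ≤ dist b a + dist a (q : Z) := dist_triangle _ _ _
        _ < ρ (q : Z) / 2 + ρ (q : Z) / 2 := by rw [dist_comm b a]; linarith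
        _ = ρ (q : Z) := by ring
    refine ⟨N (q : Z), hNsub _, hNpre _, ?_, ?_, ?_⟩
    · exact hρsub (q : Z) q.2 ⟨ha, mem_ball.mpr (by linarith [hρpos (q:Z) q.2])⟩
    · exact hρsub (q : Z) q.2 ⟨hb, mem_ball.mpr hbq⟩
    · intro y hy
      have h1 : dist y (q : Z) < ε/4 := mem_ball.mp (hNball (q : Z) q.2 hy)
      have h2 : ρ (q : Z) ≤ ε / 4 := hρle (q : Z) q.2
      rw [mem_ball]
      calc dist y a ≤ dist y (q : Z) + dist (q : Z) a := dist_triangle _ _ _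
        _ < ε/4 + ρ (q : Z) / 2 := by rw [dist_comm (q : Z) a]; linarith
        _ < ε := by linarith

lemma lc_of_local {M : Set Z}
    (h : ∀ q ∈ M, ∀ ε : ℝ, 0 < ε → ∃ (A : Set Z) (δ : ℝ), 0 < δ ∧ A ⊆ M ∧ IsPreconnected A ∧
      M ∩ ball q δ ⊆ A ∧ A ⊆ ball q ε) :
    LocallyConnectedSpace (M : Set Z) := by
  rw [locallyConnectedSpace_iff_connected_subsets]
  intro q U hU
  obtain ⟨ε, hε, hball⟩ := Metric.mem_nhds_iff.mp hU
  obtain ⟨A, δ, hδ, hAM, hApre, hAin, hAout⟩ := h (q : Z) q.2 ε hε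
  refine ⟨Subtype.val ⁻¹' A, ?_, ?_, ?_⟩
  · rw [Metric.mem_nhds_iff]
    refine ⟨δ, hδ, ?_⟩
    intro y hy
    have : dist (y : Z) (q : Z) < δ := hy
    exact hAin ⟨y.2, mem_ball.mpr this⟩
  · refine (Topology.IsInducing.subtypeVal.isPreconnected_image).mp ?_
    rwa [Subtype.image_preimage_coe, inter_eq_right.mpr hAM]
  · intro y hy
    have : (y : Z) ∈ ball (q : Z) ε := hAout hy
    exact hball (by exact this)

end Aux


/-- Boundary bumping lemma via Šura-Bura. -/
lemma bump {W : Type*} [TopologicalSpace W] [T2Space W] [CompactSpace W] [PreconnectedSpace W]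
    {U : Set W} (hU : IsOpen U) (hne : Uᶜ.Nonempty) {b : W} (hb : b ∈ U) :
    (closure (connectedComponentIn U b) ∩ Uᶜ).Nonempty := by
  by_contra hcon
  rw [not_nonempty_iff_eq_empty] at hcon
  set C := connectedComponentIn U b with hC
  have hclCU : closure C ⊆ U := by
    intro z hz
    by_contra hzU
    have : z ∈ closure C ∩ Uᶜ := ⟨hz, hzU⟩
    simp [hcon] at this
  have hCcl : closure C = C :=
    (isPreconnected_connectedComponentIn.closure.subset_connectedComponentIn
      (subset_closure (mem_connectedComponentIn hb)) hclCU).antisymm subset_closure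
  have hCclosed : IsClosed C := hCcl ▸ isClosed_closure
  obtain ⟨V, hVopen, hCV, hclVU⟩ := normal_exists_closure_subset hCclosed hU
    (hCcl ▸ hclCU)
  -- C is the connected component of b in closure V
  have hbV : b ∈ V := hCV (mem_connectedComponentIn hb)
  have hCeq : C = connectedComponentIn (closure V) b := by
    apply Subset.antisymm
    · exact isPreconnected_connectedComponentIn.subset_connectedComponentIn
        (mem_connectedComponentIn hb) (hCV.trans subset_closure)
    · exact isPreconnected_connectedComponentIn.subset_connectedComponentIn
        (mem_connectedComponentIn (subset_closure hbV))
        ((connectedComponentIn_subset _ _).trans hclVU)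
  -- pass to the subtype of closure V
  haveI : CompactSpace (closure V) := isCompact_iff_compactSpace.mp
    (isClosed_closure.isCompact)
  set b' : (closure V : Set W) := ⟨b, subset_closure hbV⟩ with hb'
  have hSB := connectedComponent_eq_iInter_isClopen b'
  have himage : C = Subtype.val '' connectedComponent b' := by
    rw [hCeq, connectedComponentIn_eq_image (subset_closure hbV)]
  have hsubV : connectedComponent b' ⊆ Subtype.val ⁻¹' V := by
    intro w hw
    have : (w : W) ∈ C := himage ▸ mem_image_of_mem _ hw
    exact hCV this
  -- compactness: finitely many clopens suffice
  have hVo' : IsOpen (Subtype.val ⁻¹' V : Set (closure V : Set W)) :=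
    hVopen.preimage continuous_subtype_val
  have hcomp : IsCompact ((Subtype.val ⁻¹' V : Set (closure V : Set W))ᶜ) :=
    (hVo'.isClosed_compl).isCompact
  have hcover : ((Subtype.val ⁻¹' V : Set (closure V : Set W))ᶜ) ⊆
      ⋃ (s : { s : Set (closure V : Set W) // IsClopen s ∧ b' ∈ s }), (s : Set _)ᶜ := by
    intro w hw
    by_contra hw'
    simp only [mem_iUnion, not_exists, mem_compl_iff, not_not] at hw'
    have : w ∈ connectedComponent b' := hSB ▸ mem_iInter.mpr (fun s => hw' s)
    exact hw (hsubV this)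
  obtain ⟨t, ht⟩ := hcomp.elim_finite_subcover _ (fun s => s.2.1.1.isOpen_compl) hcover
  -- F := finite intersection of the clopens
  set F : Set (closure V : Set W) := ⋂ s ∈ t, (s : Set _) with hF
  have hFclopen : IsClopen F := isClopen_biInter_finset (fun s _ => s.2.1)
  have hbF : b' ∈ F := mem_iInter₂.mpr (fun s _ => s.2.2)
  have hFV : F ⊆ Subtype.val ⁻¹' V := by
    intro w hw
    by_contra hwV
    obtain ⟨s, hst, hs⟩ := mem_iUnion₂.mp (ht hwV)
    exact hs (mem_iInter₂.mp hw s hst)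
  -- transfer F to a clopen subset of W
  obtain ⟨O, hOopen, hOF⟩ := isOpen_induced_iff.mp hFclopen.2
  have hFimage : Subtype.val '' F = O ∩ V := by
    apply Subset.antisymm
    · rintro _ ⟨w, hwF, rfl⟩
      exact ⟨by rw [← hOF] at hwF; exact hwF, hFV hwF⟩
    · rintro y ⟨hyO, hyV⟩
      exact ⟨⟨y, subset_closure hyV⟩, by rw [← hOF]; exact hyO, rfl⟩
  have hopenF : IsOpen (Subtype.val '' F) := hFimage ▸ hOopen.inter hVopen
  have hclosedF : IsClosed (Subtype.val '' F) :=
    (hFclopen.1.isCompact.image continuous_subtype_val).isClosed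
  have huniv := (isClopen_iff.mp ⟨hclosedF, hopenF⟩).resolve_left
    (Nonempty.ne_empty ⟨b, mem_image_of_mem _ hbF⟩)
  obtain ⟨u, hu⟩ := hne
  have : u ∈ Subtype.val '' F := huniv ▸ mem_univ u
  rw [hFimage] at this
  exact hu (hclVU (subset_closure this.2))


/-- For `f : X → Y` with closed, connected and locally connected graph,
where `X` is a connected, locally connected, locally compact, second-countable metrizable
space and `Y` is a locally compact, second-countable metrizable space, for each
discontinuity point `x` of `f` there exist `U` relatively open in the graph and a locally
connected continuum `E` inside the graph with the four listed properties. -/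
theorem stmt3 {X Y : Type*} [TopologicalSpace X] [TopologicalSpace Y]
    [ConnectedSpace X] [LocallyConnectedSpace X] [LocallyCompactSpace X]
    [SecondCountableTopology X] [TopologicalSpace.MetrizableSpace X]
    [LocallyCompactSpace Y] [SecondCountableTopology Y]
    [TopologicalSpace.MetrizableSpace Y]
    (f : X → Y)
    (hclosed : IsClosed (Set.range fun z => (z, f z)))
    (hconn : IsConnected (Set.range fun z => (z, f z)))
    (hlc : LocallyConnectedSpace (Set.range fun z => (z, f z)))
    (x : X) (hx : ¬ ContinuousAt f x) :
    ∃ U E : Set (X × Y),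
      -- U is relatively open in the graph
      (∃ V : Set (X × Y), IsOpen V ∧ U = V ∩ Set.range fun z => (z, f z)) ∧
      -- (1) (x, f x) ∈ U ⊆ E ⊆ graph f, E a locally connected continuum
      (x, f x) ∈ U ∧ U ⊆ E ∧ E ⊆ Set.range (fun z => (z, f z)) ∧
      IsCompact E ∧ IsConnected E ∧ LocallyConnectedSpace E ∧
      -- (2) U ∩ graph (f|D(f)) = U ∩ graph (f|frontier (π E)), and x ∈ frontier (π E)
      (U ∩ ((fun z => (z, f z)) '' {z | ¬ ContinuousAt f z}) =
        U ∩ ((fun z => (z, f z)) '' frontier (Prod.fst '' E))) ∧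
      x ∈ frontier (Prod.fst '' E) ∧
      -- (3) sequences in X \ π(E) converging to x have images without cluster points
      (∀ u : ℕ → X, (∀ n, u n ∉ Prod.fst '' E) → Tendsto u atTop (𝓝 x) →
        ∀ y : Y, ¬ MapClusterPt y atTop (f ∘ u)) ∧
      -- (4) X \ π(E) has finitely many connected components
      {C : Set X | ∃ z ∈ (Prod.fst '' E)ᶜ, C = connectedComponentIn (Prod.fst '' E)ᶜ z}.Finite := by
  classical
  set φ : X → X × Y := fun z => (z, f z) with hφdef
  set Γ : Set (X × Y) := Set.range φ with hΓdef
  haveI hlcΓ : LocallyConnectedSpace ↥Γ := hlc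
  haveI hconnΓ : ConnectedSpace ↥Γ := Subtype.connectedSpace hconn
  haveI hlcpΓ : LocallyCompactSpace ↥Γ := hclosed.locallyCompactSpace
  letI mX : MetricSpace X := TopologicalSpace.metrizableSpaceMetric X
  letI mG : MetricSpace ↥Γ := TopologicalSpace.metrizableSpaceMetric ↥Γ
  -- graph basics
  have hmem : ∀ z : X, φ z ∈ Γ := fun z => ⟨z, rfl⟩
  have hval : ∀ g : ↥Γ, (g : X × Y) = φ ((g : X × Y).1) := by
    rintro ⟨-, w, rfl⟩; rfl
  have hginj : ∀ g g' : ↥Γ, (g : X × Y).1 = (g' : X × Y).1 → g = g' := by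
    intro g g' h
    apply Subtype.ext
    rw [hval g, hval g', h]
  set π : ↥Γ → X := fun g => (g : X × Y).1 with hπdef
  have hπcont : Continuous π := continuous_fst.comp continuous_subtype_val
  set pt : ↥Γ := ⟨φ x, hmem x⟩ with hptdef
  -- the Peano neighborhood in the graph
  obtain ⟨Ω, hΩo, hptΩ, hΩpre, hE₀c, hE₀cover⟩ := peano_nbhd pt
  set E₀ : Set ↥Γ := closure Ω with hE₀def
  have hE₀closed : IsClosed E₀ := isClosed_closure
  have hΩE₀ : Ω ⊆ E₀ := subset_closure
  have hptE₀ : pt ∈ E₀ := hΩE₀ hptΩ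
  have hE₀pre : IsPreconnected E₀ := hΩpre.closure
  -- S₀ and its neighborhood K
  set S₀ : Set X := π '' E₀ with hS₀def
  have hS₀c : IsCompact S₀ := hE₀c.image hπcont
  have hS₀ne : S₀.Nonempty := ⟨x, pt, hptE₀, rfl⟩
  obtain ⟨K, hKc, hKint⟩ := exists_compact_superset hS₀c
  obtain ⟨E₂, hE₂c, hE₂int⟩ := exists_compact_superset hE₀c
  have hE₀E₂ : E₀ ⊆ E₂ := hE₂int.trans interior_subset
  -- membership in S₀ versus E₀
  have hmemS₀ : ∀ g : ↥Γ, π g ∈ S₀ ↔ g ∈ E₀ := by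
    intro g
    constructor
    · rintro ⟨e, he, heq⟩
      rwa [hginj e g heq] at he
    · intro h; exact ⟨g, h, rfl⟩
  -- badness and the set S
  set Bad : X → Prop := fun z => z ∈ S₀ᶜ ∧
    ((connectedComponentIn S₀ᶜ z ∩ Kᶜ).Nonempty ∨
      ∃ g : ↥Γ, π g ∈ connectedComponentIn S₀ᶜ z ∧ ¬ connectedComponentIn E₀ᶜ g ⊆ E₂)
    with hBaddef
  set S : Set X := {z | ¬ Bad z} with hSdef
  have hS₀closed : IsClosed S₀ := hS₀c.isClosed
  have hbadC : ∀ z z', Bad z → z' ∈ connectedComponentIn S₀ᶜ z → Bad z' := by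
    intro z z' hz hz'
    have hcc : connectedComponentIn S₀ᶜ z = connectedComponentIn S₀ᶜ z' :=
      connectedComponentIn_eq hz'
    refine ⟨connectedComponentIn_subset S₀ᶜ z hz', ?_⟩
    rw [← hcc]
    exact hz.2
  have hS₀S : S₀ ⊆ S := by
    intro z hz hbad
    exact hbad.1 hz
  have hSclosed : IsClosed S := by
    rw [hSdef]
    rw [show {z | ¬ Bad z} = {z | Bad z}ᶜ from rfl]
    refine isClosed_compl_iff.mpr ?_
    refine isOpen_iff_mem_nhds.mpr ?_
    intro z hz
    refine Filter.mem_of_superset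
      ((hS₀closed.isOpen_compl.connectedComponentIn).mem_nhds
        (mem_connectedComponentIn hz.1)) ?_
    intro z' hz'
    exact hbadC z z' hz hz'
  -- π-images of components in the graph
  have hcomp_sub : ∀ g : ↥Γ, g ∈ E₀ᶜ → ∀ g' ∈ connectedComponentIn E₀ᶜ g,
      π g' ∈ connectedComponentIn S₀ᶜ (π g) := by
    intro g hg g' hg'
    have h1 : IsPreconnected (π '' connectedComponentIn E₀ᶜ g) :=
      isPreconnected_connectedComponentIn.image π hπcont.continuousOn
    have h2 : π '' connectedComponentIn E₀ᶜ g ⊆ S₀ᶜ := by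
      rintro - ⟨a, ha, rfl⟩
      intro haS₀
      exact (connectedComponentIn_subset E₀ᶜ g ha) ((hmemS₀ a).mp haS₀)
    have h3 := h1.subset_connectedComponentIn (mem_image_of_mem π (mem_connectedComponentIn hg)) h2
    exact h3 (mem_image_of_mem π hg')
  -- the filled set in the graph
  set EG : Set ↥Γ := π ⁻¹' S with hEGdef
  have hE₀EG : E₀ ⊆ EG := by
    intro g hg
    exact hS₀S ((hmemS₀ g).mpr hg)
  have hptEG : pt ∈ EG := hE₀EG hptE₀
  have hPEG : ∀ g ∈ EG, g ∉ E₀ → connectedComponentIn E₀ᶜ g ⊆ EG := by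
    intro g hgE hgE₀ g' hg'
    have hz' := hcomp_sub g hgE₀ g' hg'
    intro hbad'
    have hzS₀ : π g ∈ S₀ᶜ := fun hS₀m => hgE₀ ((hmemS₀ g).mp hS₀m)
    have hcc : connectedComponentIn S₀ᶜ (π g) = connectedComponentIn S₀ᶜ (π g') :=
      connectedComponentIn_eq hz'
    refine hgE ⟨hzS₀, ?_⟩
    rw [hcc]
    exact hbad'.2
  have hEGE₂ : EG ⊆ E₂ := by
    intro g hg
    by_cases hgE₀ : g ∈ E₀
    · exact hE₀E₂ hgE₀
    · have hzS₀ : π g ∈ S₀ᶜ := fun hS₀m => hgE₀ ((hmemS₀ g).mp hS₀m)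
      by_contra hgE₂
      refine hg ⟨hzS₀, Or.inr ⟨g, mem_connectedComponentIn hzS₀, ?_⟩⟩
      intro hsub
      exact hgE₂ (hsub (mem_connectedComponentIn hgE₀))
  have hEGclosed : IsClosed EG := hSclosed.preimage hπcont
  have hEGc : IsCompact EG := hE₂c.of_isClosed_subset hEGclosed hEGE₂
  -- closure of components of the complement of E₀, connectivity of EG
  have hclP : ∀ g : ↥Γ, closure (connectedComponentIn E₀ᶜ g) ⊆
      connectedComponentIn E₀ᶜ g ∪ E₀ := fun g => closure_cCI hE₀closed
  have hPmeets : ∀ g : ↥Γ, g ∈ E₀ᶜ →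
      (closure (connectedComponentIn E₀ᶜ g) ∩ E₀).Nonempty :=
    fun g hg => cCI_meets hE₀closed ⟨pt, hptE₀⟩ hg
  have hEGpre : IsPreconnected EG := by
    refine isPreconnected_of_forall pt ?_
    intro g hg
    by_cases hgE₀ : g ∈ E₀
    · exact ⟨E₀, hE₀EG, hptE₀, hgE₀, hE₀pre⟩
    · refine ⟨closure (connectedComponentIn E₀ᶜ g) ∪ E₀, ?_, Or.inr hptE₀,
        Or.inl (subset_closure (mem_connectedComponentIn hgE₀)), ?_⟩
      · refine union_subset ?_ hE₀EG
        exact (hclP g).trans (union_subset (hPEG g hg hgE₀) hE₀EG)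
      · obtain ⟨w, hw1, hw2⟩ := hPmeets g hgE₀
        exact IsPreconnected.union w hw1 hw2 isPreconnected_connectedComponentIn.closure hE₀pre
  -- local connectedness of EG
  have hlcEG : LocallyConnectedSpace (EG : Set ↥Γ) := by
    refine lc_of_local ?_
    intro q hq ε hε
    by_cases hqE₀ : q ∈ E₀
    · -- boundary case: connector construction
      obtain ⟨δ₁, hδ₁, hULC₁⟩ := ulc_of_cover hE₀c hE₀cover (by positivity : (0:ℝ) < ε/4)
      have hη : 0 < min (ε/4) (δ₁/4) := lt_min (by positivity) (by positivity)
      obtain ⟨O, hOo, hOpre, hqO, hOsub, hOc⟩ :=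
        exists_good_nbhd q isOpen_ball (mem_ball_self hη)
      obtain ⟨δ, hδ, hballO⟩ := Metric.isOpen_iff.mp hOo q hqO
      have hconn_b : ∀ b ∈ EG ∩ ball q δ, ∃ A : Set ↥Γ, A ⊆ EG ∧ IsPreconnected A ∧
          q ∈ A ∧ b ∈ A ∧ A ⊆ ball q ε := by
        intro b hb
        have hbO : b ∈ O := hballO hb.2
        have hbη : dist b q < min (ε/4) (δ₁/4) := mem_ball.mp (hOsub hbO)
        by_cases hbE₀ : b ∈ E₀
        · obtain ⟨A, hA1, hA2, hA3, hA4, hA5⟩ := hULC₁ q hqE₀ b hbE₀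
            (by rw [dist_comm]
                exact lt_of_lt_of_le hbη ((min_le_right _ _).trans (by linarith)))
          exact ⟨A, hA1.trans hE₀EG, hA2, hA3, hA4,
            hA5.trans (ball_subset_ball (by linarith))⟩
        · -- the bumping argument
          haveI : CompactSpace (closure O : Set ↥Γ) := isCompact_iff_compactSpace.mp hOc
          haveI : PreconnectedSpace (closure O : Set ↥Γ) :=
            Subtype.preconnectedSpace hOpre.closure
          set U : Set (closure O : Set ↥Γ) := Subtype.val ⁻¹' (E₀ᶜ) with hUdef
          have hUo : IsOpen U := (hE₀closed.isOpen_compl).preimage continuous_subtype_val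
          have hUcne : Uᶜ.Nonempty := ⟨⟨q, subset_closure hqO⟩, fun hc => hc hqE₀⟩
          have hb' : (⟨b, subset_closure hbO⟩ : (closure O : Set ↥Γ)) ∈ U := hbE₀
          obtain ⟨w', hw'cl, hw'E₀⟩ := bump hUo hUcne hb'
          set Cset : Set ↥Γ := Subtype.val '' connectedComponentIn U ⟨b, subset_closure hbO⟩
            with hCsetdef
          have hCsetpre : IsPreconnected Cset :=
            isPreconnected_connectedComponentIn.image _ continuous_subtype_val.continuousOn
          have hCsetE₀ : Cset ⊆ E₀ᶜ := by
            rintro - ⟨a, ha, rfl⟩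
            exact connectedComponentIn_subset U _ ha
          have hbCset : b ∈ Cset := ⟨_, mem_connectedComponentIn hb', rfl⟩
          have hCsetP : Cset ⊆ connectedComponentIn E₀ᶜ b :=
            hCsetpre.subset_connectedComponentIn hbCset hCsetE₀
          have hwcl : (w' : ↥Γ) ∈ closure Cset :=
            image_closure_subset_closure_image continuous_subtype_val ⟨w', hw'cl, rfl⟩
          have hwE₀ : (w' : ↥Γ) ∈ E₀ := by
            by_contra hc
            exact hw'E₀ hc
          have hclCsetEG : closure Cset ⊆ EG := by
            refine (closure_mono hCsetP).trans ?_
            refine (hclP b).trans ?_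
            exact union_subset (hPEG b hb.1 hbE₀) hE₀EG
          have hCsetT : Cset ⊆ closure O := by
            rintro - ⟨a, ha, rfl⟩
            exact a.2
          have hwq : dist (w' : ↥Γ) q ≤ min (ε/4) (δ₁/4) := by
            have h1 : closure Cset ⊆ closure (closure O) :=
              closure_mono hCsetT
            have h2 : (w' : ↥Γ) ∈ closure O := by
              rw [closure_closure] at h1
              exact h1 hwcl
            have h3 : closure O ⊆ closedBall q (min (ε/4) (δ₁/4)) :=
              (closure_mono hOsub).trans closure_ball_subset_closedBall
            exact mem_closedBall.mp (h3 h2)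
          obtain ⟨A₂, hA₂1, hA₂2, hA₂3, hA₂4, hA₂5⟩ := hULC₁ q hqE₀ (w' : ↥Γ) hwE₀
            (by rw [dist_comm]
                exact lt_of_le_of_lt hwq (lt_of_le_of_lt (min_le_right _ _) (by linarith)))
          refine ⟨closure Cset ∪ A₂, union_subset hclCsetEG (hA₂1.trans hE₀EG),
            IsPreconnected.union (w' : ↥Γ) hwcl hA₂4 hCsetpre.closure hA₂2,
            Or.inr hA₂3, Or.inl (subset_closure hbCset), ?_⟩
          refine union_subset ?_ (hA₂5.trans (ball_subset_ball (by linarith)))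
          intro a ha
          have h1 : closure Cset ⊆ closedBall q (min (ε/4) (δ₁/4)) := by
            refine (closure_mono (hCsetT.trans ((closure_mono hOsub).trans
              closure_ball_subset_closedBall))).trans ?_
            rw [IsClosed.closure_eq Metric.isClosed_closedBall]
          have h2 := mem_closedBall.mp (h1 ha)
          rw [mem_ball]
          have h3 : min (ε/4) (δ₁/4) ≤ ε/4 := min_le_left _ _
          linarith
      choose! A hA1 hA2 hA3 hA4 hA5 using hconn_b
      refine ⟨⋃ b ∈ EG ∩ ball q δ, A b, δ, hδ, ?_, ?_, ?_, ?_⟩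
      · exact iUnion₂_subset (fun b hb => hA1 b hb)
      · refine isPreconnected_of_forall q ?_
        intro y hy
        obtain ⟨b, hb, hyA⟩ := mem_iUnion₂.mp hy
        exact ⟨A b, subset_iUnion₂_of_subset b hb subset_rfl, hA3 b hb, hyA, hA2 b hb⟩
      · intro b hb
        exact mem_iUnion₂.mpr ⟨b, hb, hA4 b hb⟩
      · exact iUnion₂_subset (fun b hb => hA5 b hb)
    · -- interior case
      have hP : IsOpen (connectedComponentIn E₀ᶜ q) :=
        hE₀closed.isOpen_compl.connectedComponentIn
      have hqP : q ∈ connectedComponentIn E₀ᶜ q := mem_connectedComponentIn hqE₀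
      obtain ⟨O, hOo, hOpre, hqO, hOsub, hOc⟩ :=
        exists_good_nbhd q (hP.inter isOpen_ball) ⟨hqP, mem_ball_self hε⟩
      obtain ⟨δ, hδ, hballO⟩ := Metric.isOpen_iff.mp hOo q hqO
      refine ⟨O, δ, hδ, ?_, hOpre, ?_, ?_⟩
      · intro a ha
        exact hPEG q hq hqE₀ (hOsub ha).1
      · intro a ha
        exact hballO ha.2
      · intro a ha
        exact (hOsub ha).2
  -- transfer to the ambient product space
  letI mY : MetricSpace Y := TopologicalSpace.metrizableSpaceMetric Y
  set Efinal : Set (X × Y) := Subtype.val '' EG with hEfinaldef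
  have hEfinalΓ : Efinal ⊆ Γ := by rintro - ⟨g, hg, rfl⟩; exact g.2
  have hEfc : IsCompact Efinal := hEGc.image continuous_subtype_val
  have hEfconn : IsConnected Efinal :=
    ⟨⟨Subtype.val pt, mem_image_of_mem _ hptEG⟩,
      hEGpre.image _ continuous_subtype_val.continuousOn⟩
  have hπE : Prod.fst '' Efinal = S := by
    apply Subset.antisymm
    · rintro - ⟨-, ⟨g, hg, rfl⟩, rfl⟩
      exact hg
    · intro z hz
      exact ⟨Subtype.val (⟨φ z, hmem z⟩ : ↥Γ), mem_image_of_mem _ (by exact hz), rfl⟩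
  have hlcEfinal : LocallyConnectedSpace ↥Efinal := by
    have e : ↥Efinal ≃ₜ ↥EG :=
      { toFun := fun v => ⟨⟨v.1, by obtain ⟨g, hg, hgeq⟩ := v.2; rw [← hgeq]; exact g.2⟩, by
          obtain ⟨g, hg, hgeq⟩ := v.2
          have : (v : X × Y).1 ∈ S := by rw [← hgeq]; exact hg
          exact this⟩
        invFun := fun g => ⟨(g.1 : X × Y), ⟨g.1, g.2, rfl⟩⟩
        left_inv := fun v => Subtype.ext rfl
        right_inv := fun g => Subtype.ext (Subtype.ext rfl)
        continuous_toFun := by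
          refine Continuous.subtype_mk (Continuous.subtype_mk continuous_subtype_val ?_) ?_
        continuous_invFun := Continuous.subtype_mk
          (continuous_subtype_val.comp continuous_subtype_val) _ }
    exact e.locallyConnectedSpace
  -- escape of sequences
  set Q : Set Y := Prod.snd '' (Subtype.val '' E₂) with hQdef
  have hQcomp : IsCompact Q := (hE₂c.image continuous_subtype_val).image continuous_snd
  have hSQ : ∀ z : X, z ∈ S → f z ∈ Q := by
    intro z hz
    exact ⟨Subtype.val (⟨φ z, hmem z⟩ : ↥Γ),
      mem_image_of_mem _ (hEGE₂ (show (⟨φ z, hmem z⟩ : ↥Γ) ∈ EG from hz)), rfl⟩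
  have hesc : ∀ z : X, ¬ ContinuousAt f z → ∃ u : ℕ → X,
      Tendsto u atTop (𝓝 z) ∧ ∀ᶠ n in atTop, u n ∉ S := by
    intro z hz
    rw [ContinuousAt] at hz
    obtain ⟨s, hs, hns⟩ : ∃ s ∈ 𝓝 (f z), {w | f w ∈ s} ∉ 𝓝 z := by
      by_contra hc
      push_neg at hc
      exact hz (fun s hs => hc s hs)
    have hseq : ∀ n : ℕ, ∃ w, w ∈ ball z (1/((n:ℝ)+1)) ∧ f w ∉ s := by
      intro n
      by_contra hc
      push_neg at hc
      refine hns (Filter.mem_of_superset (ball_mem_nhds z (show (0:ℝ) < 1/((n:ℝ)+1) by positivity)) ?_)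
      intro w hw
      exact hc w hw
    choose u hu1 hu2 using hseq
    have hutend : Tendsto u atTop (𝓝 z) := by
      rw [Metric.tendsto_atTop]
      intro ε' hε'
      obtain ⟨N, hN⟩ := exists_nat_one_div_lt hε'
      refine ⟨N, fun n hn => ?_⟩
      have h1 : dist (u n) z < 1/((n:ℝ)+1) := mem_ball.mp (hu1 n)
      have h2 : (1:ℝ)/((n:ℝ)+1) ≤ 1/((N:ℝ)+1) := by
        apply one_div_le_one_div_of_le
        · positivity
        · exact_mod_cast by exact_mod_cast Nat.add_le_add_right hn 1
      calc dist (u n) z < 1/((n:ℝ)+1) := h1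
        _ ≤ 1/((N:ℝ)+1) := h2
        _ < ε' := by exact_mod_cast hN
    refine ⟨u, hutend, ?_⟩
    by_contra hc
    rw [Filter.not_eventually] at hc
    have hc' : ∃ᶠ n in atTop, (fun n => f (u n)) n ∈ Q :=
      hc.mono (fun n hn => hSQ _ (not_not.mp hn))
    obtain ⟨y, hyQ, θ, hθ, hθt⟩ := hQcomp.tendsto_subseq' hc'
    have h1 : Tendsto (fun k => u (θ k)) atTop (𝓝 z) := hutend.comp hθ.tendsto_atTop
    have h2 : Tendsto (fun k => φ (u (θ k))) atTop (𝓝 (z, y)) := h1.prodMk_nhds hθt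
    have h3 : (z, y) ∈ Γ :=
      hclosed.mem_of_tendsto h2 (Eventually.of_forall (fun k => hmem (u (θ k))))
    obtain ⟨w, hw⟩ := h3
    have hyz : y = f z := by
      have hw1 : w = z := congrArg Prod.fst hw
      have hw2 : f w = y := congrArg Prod.snd hw
      rw [← hw2, hw1]
    rw [hyz] at hθt
    obtain ⟨k, hk⟩ := (hθt.eventually_mem hs).exists
    exact hu2 (θ k) hk
  -- frontier facts
  have hxS : x ∈ S := hptEG
  have hfr1 : ∀ z : X, ¬ ContinuousAt f z → z ∈ S → z ∈ frontier S := by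
    intro z hz hzS
    refine ⟨subset_closure hzS, ?_⟩
    intro hint
    obtain ⟨u, hut, hun⟩ := hesc z hz
    have hev : ∀ᶠ n in atTop, u n ∈ S := hut.eventually_mem (mem_interior_iff_mem_nhds.mp hint)
    obtain ⟨n, h1, h2⟩ := (hev.and hun).exists
    exact h2 h1
  obtain ⟨V, hVo, hVeq⟩ := isOpen_induced_iff.mp hΩo
  have hVmk : ∀ w : X, φ w ∈ V → (⟨φ w, hmem w⟩ : ↥Γ) ∈ Ω := by
    intro w hw
    rw [← hVeq]
    exact hw
  have hUV : ∀ v ∈ Subtype.val '' Ω, v ∈ V := by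
    rintro - ⟨g, hg, rfl⟩
    rw [← hVeq] at hg
    exact hg
  have hUmem : ∀ z : X, φ z ∈ Subtype.val '' Ω → (⟨φ z, hmem z⟩ : ↥Γ) ∈ Ω := by
    intro z hz
    obtain ⟨g, hg, hgeq⟩ := hz
    have : g = (⟨φ z, hmem z⟩ : ↥Γ) := hginj g _ (by rw [hgeq])
    rwa [this] at hg
  have hfr2 : ∀ z : X, ContinuousAt f z → φ z ∈ V → z ∈ interior S := by
    intro z hz hzV
    rw [mem_interior_iff_mem_nhds]
    have hφc : ContinuousAt φ z := continuousAt_id.prodMk hz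
    have hev : ∀ᶠ w in 𝓝 z, φ w ∈ V := hφc.eventually_mem (hVo.mem_nhds hzV)
    refine Filter.mem_of_superset hev ?_
    intro w hw
    exact hE₀EG (hΩE₀ (hVmk w hw))
  -- statement (2)
  have h2main : Subtype.val '' Ω ∩ (φ '' {z | ¬ ContinuousAt f z}) =
      Subtype.val '' Ω ∩ (φ '' frontier S) := by
    ext v
    constructor
    · rintro ⟨hvU, z, hzD, rfl⟩
      refine ⟨hvU, z, ?_, rfl⟩
      exact hfr1 z hzD (hE₀EG (hΩE₀ (hUmem z hvU)))
    · rintro ⟨hvU, z, hzF, rfl⟩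
      refine ⟨hvU, z, ?_, rfl⟩
      intro hcont
      exact hzF.2 (hfr2 z hcont (hUV _ hvU))
  -- statement (3)
  have h3main : ∀ u : ℕ → X, (∀ n, u n ∉ S) → Tendsto u atTop (𝓝 x) →
      ∀ y : Y, ¬ MapClusterPt y atTop (f ∘ u) := by
    intro u hu hut y hy
    have hyNB : (𝓝 y ⊓ map (f ∘ u) atTop).NeBot := hy
    obtain ⟨θ, hθ, hθt⟩ := subseq_tendsto_of_neBot hyNB
    have h1 : Tendsto (fun k => u (θ k)) atTop (𝓝 x) := hut.comp hθ.tendsto_atTop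
    have h2 : Tendsto (fun k => φ (u (θ k))) atTop (𝓝 (x, y)) := h1.prodMk_nhds hθt
    have h3 : (x, y) ∈ Γ :=
      hclosed.mem_of_tendsto h2 (Eventually.of_forall (fun k => hmem (u (θ k))))
    obtain ⟨w, hw⟩ := h3
    have hyx : (x, y) = φ x := by
      have hw1 : w = x := congrArg Prod.fst hw
      rw [← hw, hw1]
    rw [hyx] at h2
    have hφxV : φ x ∈ V := hUV _ (mem_image_of_mem _ hptΩ)
    obtain ⟨k, hk⟩ := (h2.eventually_mem (hVo.mem_nhds hφxV)).exists
    exact hu (θ k) (hE₀EG (hΩE₀ (hVmk _ hk)))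
  -- statement (4)
  have h4main : {C : Set X | ∃ z ∈ Sᶜ, C = connectedComponentIn Sᶜ z}.Finite := by
    have hSS₀ : Sᶜ ⊆ S₀ᶜ := compl_subset_compl.mpr hS₀S
    have hcompEq : ∀ z ∈ Sᶜ, connectedComponentIn Sᶜ z = connectedComponentIn S₀ᶜ z := by
      intro z hz
      apply Subset.antisymm
      · exact isPreconnected_connectedComponentIn.subset_connectedComponentIn
          (mem_connectedComponentIn hz) ((connectedComponentIn_subset _ _).trans hSS₀)
      · refine isPreconnected_connectedComponentIn.subset_connectedComponentIn
          (mem_connectedComponentIn (hSS₀ hz)) ?_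
        intro z' hz'
        exact fun hns => hns (hbadC z z' (not_not.mp hz) hz')
    have hℱ₁ := ends_finite hS₀c hS₀ne hKc hKint
    have h𝒫 := ends_finite hE₀c ⟨pt, hptE₀⟩ hE₂c hE₂int
    have hℱ₂ : {C : Set X | ∃ P ∈ {P : Set ↥Γ | ∃ g ∈ E₀ᶜ, P = connectedComponentIn E₀ᶜ g ∧
        (P ∩ E₂ᶜ).Nonempty}, ∃ g ∈ P, C = connectedComponentIn S₀ᶜ (π g)}.Finite := by
      have heq : {C : Set X | ∃ P ∈ {P : Set ↥Γ | ∃ g ∈ E₀ᶜ, P = connectedComponentIn E₀ᶜ g ∧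
          (P ∩ E₂ᶜ).Nonempty}, ∃ g ∈ P, C = connectedComponentIn S₀ᶜ (π g)} =
          ⋃ P ∈ {P : Set ↥Γ | ∃ g ∈ E₀ᶜ, P = connectedComponentIn E₀ᶜ g ∧
          (P ∩ E₂ᶜ).Nonempty}, {C : Set X | ∃ g ∈ P, C = connectedComponentIn S₀ᶜ (π g)} := by
        ext C
        simp only [mem_iUnion, mem_setOf_eq, exists_prop]
      rw [heq]
      refine Set.Finite.biUnion h𝒫 ?_
      rintro P ⟨g₀, hg₀, rfl, -⟩
      refine Set.Subsingleton.finite ?_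
      rintro C₁ ⟨g₁, hg₁, rfl⟩ C₂ ⟨g₂, hg₂, rfl⟩
      have e₁ := connectedComponentIn_eq (hcomp_sub g₀ hg₀ g₁ hg₁)
      have e₂ := connectedComponentIn_eq (hcomp_sub g₀ hg₀ g₂ hg₂)
      rw [← e₁, ← e₂]
    refine Set.Finite.subset (hℱ₁.union hℱ₂) ?_
    rintro C ⟨z, hz, rfl⟩
    rw [hcompEq z hz]
    have hbad : Bad z := not_not.mp hz
    rcases hbad.2 with h|⟨g, hgC, hgE₂⟩
    · exact Or.inl ⟨z, hbad.1, rfl, h⟩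
    · right
      have hgS₀ : π g ∈ S₀ᶜ := (connectedComponentIn_subset _ _) hgC
      have hgE₀ : g ∈ E₀ᶜ := fun h' => hgS₀ ((hmemS₀ g).mpr h')
      refine ⟨connectedComponentIn E₀ᶜ g, ⟨g, hgE₀, rfl, ?_⟩,
        g, mem_connectedComponentIn hgE₀, ?_⟩
      · obtain ⟨p', hp'⟩ := not_subset.mp hgE₂
        exact ⟨p', hp'.1, hp'.2⟩
      · exact connectedComponentIn_eq hgC
  -- final assembly
  refine ⟨Subtype.val '' Ω, Efinal, ⟨V, hVo, ?_⟩, ?_, ?_, hEfinalΓ, hEfc, hEfconn, hlcEfinal,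
    ?_, ?_, ?_, ?_⟩
  · rw [← hVeq, Subtype.image_preimage_coe, inter_comm]
  · exact mem_image_of_mem _ hptΩ
  · intro v hv
    obtain ⟨g, hg, rfl⟩ := hv
    exact mem_image_of_mem _ (hE₀EG (hΩE₀ hg))
  · rw [hπE]
    exact h2main
  · rw [hπE]
    exact hfr1 x hx hxS
  · rw [hπE]
    exact h3main
  · rw [hπE]
    exact h4main
end

section
/- For n ≥ 1 let r_n = 1/(4n(n+1)) and let B_n = {(x,y) ∈ ℝ² : ((x)² + (y − 1/n)²)^(1/2) < r_n} be the open disc of radius r_n centered at (0, 1/n). Define f : ℝ² → ℝ by: f(x,y) = 0 if y ≥ 0 and (x,y) ∉ ⋃_{n≥1} B_n; f(x,y) = 1/y if y < 0; and f(x,y) = n + tan((π/(2 r_n)) · ((x)² + (y − 1/n)²)^(1/2)) if (x,y) ∈ B_n. Then the graph of f, {(p, f p) : p ∈ ℝ²} ⊆ ℝ² × ℝ, is a closed subset of ℝ² × ℝ. -/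
open Set Topology Real

/-- The radius `r n = 1/(4n(n+1))`. -/
noncomputable def exRadius (n : ℕ) : ℝ := 1 / (4 * n * (n + 1))

/-- The open disc `B n` of radius `r n` centered at `(0, 1/n)`. -/
def exDisc (n : ℕ) : Set (ℝ × ℝ) :=
  {p : ℝ × ℝ | Real.sqrt (p.1 ^ 2 + (p.2 - 1 / n) ^ 2) < exRadius n}

lemma exRadius_pos {n : ℕ} (hn : 1 ≤ n) : 0 < exRadius n := by
  have h : (0:ℝ) < n := by exact_mod_cast hn
  unfold exRadius
  positivity

lemma exDisc_dist_continuous (n : ℕ) :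
    Continuous fun p : ℝ × ℝ => Real.sqrt (p.1 ^ 2 + (p.2 - 1 / n) ^ 2) := by
  fun_prop

lemma exDisc_open (n : ℕ) : IsOpen (exDisc n) :=
  isOpen_lt (exDisc_dist_continuous n) continuous_const

lemma arg_lt {n : ℕ} (hn : 1 ≤ n) {p : ℝ × ℝ} (hp : p ∈ exDisc n) :
    π / (2 * exRadius n) * Real.sqrt (p.1 ^ 2 + (p.2 - 1 / n) ^ 2) < π / 2 := by
  have hr := exRadius_pos hn
  have hc : 0 < π / (2 * exRadius n) := by positivity
  have h2 : π / (2 * exRadius n) * exRadius n = π / 2 := by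
    field_simp
  calc π / (2 * exRadius n) * Real.sqrt (p.1 ^ 2 + (p.2 - 1 / n) ^ 2)
      < π / (2 * exRadius n) * exRadius n := mul_lt_mul_of_pos_left hp hc
    _ = π / 2 := h2

lemma arg_nonneg {n : ℕ} (hn : 1 ≤ n) (p : ℝ × ℝ) :
    0 ≤ π / (2 * exRadius n) * Real.sqrt (p.1 ^ 2 + (p.2 - 1 / n) ^ 2) := by
  have hr := exRadius_pos hn
  have hc : 0 < π / (2 * exRadius n) := by positivity
  exact mul_nonneg hc.le (Real.sqrt_nonneg _)

lemma contAt_g {n : ℕ} (hn : 1 ≤ n) {a : ℝ × ℝ} (ha : a ∈ exDisc n) :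
    ContinuousAt (fun p : ℝ × ℝ => (n:ℝ) + Real.tan (π / (2 * exRadius n) *
      Real.sqrt (p.1 ^ 2 + (p.2 - 1 / n) ^ 2))) a := by
  apply continuousAt_const.add
  have hc : ContinuousAt Real.tan (π / (2 * exRadius n) *
      Real.sqrt (a.1 ^ 2 + (a.2 - 1 / n) ^ 2)) := by
    rw [Real.continuousAt_tan]
    apply ne_of_gt
    apply Real.cos_pos_of_mem_Ioo
    constructor
    · have := arg_nonneg hn a
      have := Real.pi_pos
      linarith
    · exact arg_lt hn ha
  have hi : ContinuousAt (fun p : ℝ × ℝ => π / (2 * exRadius n) *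
      Real.sqrt (p.1 ^ 2 + (p.2 - 1 / n) ^ 2)) a :=
    (continuous_const.mul (exDisc_dist_continuous n)).continuousAt
  exact ContinuousAt.comp (g := Real.tan) hc hi

/-- The function `f` defined by the three cases (0 on the closed upper
half-plane off the discs, `1/y` for `y < 0`, and `n + tan((π/(2 rₙ))·dist)` on `B n`)
has a closed graph. -/
theorem stmt8 (f : ℝ × ℝ → ℝ)
    (hf0 : ∀ p : ℝ × ℝ, 0 ≤ p.2 → (∀ n : ℕ, 1 ≤ n → p ∉ exDisc n) → f p = 0)
    (hfneg : ∀ p : ℝ × ℝ, p.2 < 0 → f p = 1 / p.2)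
    (hfB : ∀ n : ℕ, 1 ≤ n → ∀ p ∈ exDisc n,
      f p = n + Real.tan (π / (2 * exRadius n) *
        Real.sqrt (p.1 ^ 2 + (p.2 - 1 / n) ^ 2))) :
    IsClosed (Set.range fun p => (p, f p)) := by
  have key : ∀ (p : ℕ → ℝ × ℝ) (a : ℝ × ℝ) (z : ℝ),
      Filter.Tendsto p Filter.atTop (𝓝 a) →
      Filter.Tendsto (fun k => f (p k)) Filter.atTop (𝓝 z) → z = f a := by
    intro p a z hp hz
    have hp2 : Filter.Tendsto (fun k => (p k).2) Filter.atTop (𝓝 a.2) :=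
      (continuous_snd.tendsto a).comp hp
    by_cases hneg : a.2 < 0
    · have hU : ∀ᶠ k in Filter.atTop, (p k).2 < 0 := hp2.eventually_lt_const hneg
      have hg : Filter.Tendsto (fun k => 1 / (p k).2) Filter.atTop (𝓝 (1 / a.2)) :=
        tendsto_const_nhds.div hp2 (ne_of_lt hneg)
      have hg' : Filter.Tendsto (fun k => f (p k)) Filter.atTop (𝓝 (1 / a.2)) :=
        Filter.Tendsto.congr' (hU.mono fun k hk => (hfneg _ hk).symm) hg
      rw [tendsto_nhds_unique hz hg', hfneg a hneg]
    · push_neg at hneg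
      by_cases hd : ∃ n, 1 ≤ n ∧ a ∈ exDisc n
      · obtain ⟨n, hn, haB⟩ := hd
        have hU : ∀ᶠ k in Filter.atTop, p k ∈ exDisc n :=
          hp.eventually ((exDisc_open n).eventually_mem haB)
        have hg : Filter.Tendsto (fun k => (n:ℝ) + Real.tan (π / (2 * exRadius n) *
            Real.sqrt ((p k).1 ^ 2 + ((p k).2 - 1 / n) ^ 2))) Filter.atTop
            (𝓝 ((n:ℝ) + Real.tan (π / (2 * exRadius n) *
            Real.sqrt (a.1 ^ 2 + (a.2 - 1 / n) ^ 2)))) :=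
          (contAt_g hn haB).tendsto.comp hp
        have hg' : Filter.Tendsto (fun k => f (p k)) Filter.atTop
            (𝓝 ((n:ℝ) + Real.tan (π / (2 * exRadius n) *
            Real.sqrt (a.1 ^ 2 + (a.2 - 1 / n) ^ 2)))) :=
          Filter.Tendsto.congr' (hU.mono fun k hk => (hfB n hn _ hk).symm) hg
        rw [tendsto_nhds_unique hz hg', hfB n hn a haB]
      · push_neg at hd
        have hfa : f a = 0 := hf0 a hneg hd
        set C := |z| + 1 with hCdef
        have hC : 0 < C := by positivity
        have hb : ∀ᶠ k in Filter.atTop, |f (p k)| ≤ C :=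
          hz.abs.eventually_le_const (by simp [hCdef])
        have hA : ∀ᶠ k in Filter.atTop, -(1/C) < (p k).2 := by
          apply hp2.eventually_const_lt
      
          have : 0 < 1/C := by positivity
          linarith
        set N := ⌈C⌉₊ with hNdef
        have hNC : C ≤ N := Nat.le_ceil C
        have hB : ∀ n ∈ Finset.Icc 1 N, ∀ᶠ k in Filter.atTop,
            Real.arctan C / (π / (2 * exRadius n)) <
              Real.sqrt ((p k).1 ^ 2 + ((p k).2 - 1 / n) ^ 2) := by
          intro n hn'
          obtain ⟨hn1, hnN⟩ := Finset.mem_Icc.mp hn'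
          have hr := exRadius_pos hn1
          have hcpos : 0 < π / (2 * exRadius n) := by positivity
          have hda : exRadius n ≤ Real.sqrt (a.1 ^ 2 + (a.2 - 1 / n) ^ 2) :=
            le_of_not_gt (hd n hn1)
          have hlt : Real.arctan C / (π / (2 * exRadius n)) <
              Real.sqrt (a.1 ^ 2 + (a.2 - 1 / n) ^ 2) := by
            have h1 : Real.arctan C < π / 2 := Real.arctan_lt_pi_div_two C
            have h2 : π / (2 * exRadius n) * exRadius n = π / 2 := by
              field_simp
            have h3 : Real.arctan C / (π / (2 * exRadius n)) < exRadius n := by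
              rw [div_lt_iff₀ hcpos, mul_comm]
              linarith
            linarith
          exact (((exDisc_dist_continuous n).tendsto a).comp hp).eventually_const_lt hlt
        have hBall := (Filter.eventually_all_finset (Finset.Icc 1 N)).mpr hB
        have hzero : ∀ᶠ k in Filter.atTop, f (p k) = 0 := by
          filter_upwards [hb, hA, hBall] with k h1 h2 h3
          have hy : 0 ≤ (p k).2 := by
            by_contra hy
            push_neg at hy
            have hf := hfneg _ hy
            have habs : |f (p k)| = -(1 / (p k).2) := by
              rw [hf, abs_of_neg (div_neg_of_pos_of_neg one_pos hy)]
            have hne : (p k).2 ≠ 0 := ne_of_lt hy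
            rw [habs] at h1
            have hyneg : (0:ℝ) < -(p k).2 := neg_pos.mpr hy
            have e1 : -(1 / (p k).2) * -(p k).2 ≤ C * -(p k).2 :=
              mul_le_mul_of_nonneg_right h1 hyneg.le
            have e2 : -(1 / (p k).2) * -(p k).2 = 1 := by field_simp
            have e4 : -(1 / C) * C < (p k).2 * C := mul_lt_mul_of_pos_right h2 hC
            have e5 : -(1 / C) * C = -1 := by field_simp
            rw [e2] at e1
            rw [e5] at e4
            nlinarith
          refine hf0 _ hy ?_
          intro n hn1 hmem
          have hr := exRadius_pos hn1
          have harg0 := arg_nonneg hn1 (p k)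
          have hargl := arg_lt hn1 hmem
          have htan0 : 0 ≤ Real.tan (π / (2 * exRadius n) *
              Real.sqrt ((p k).1 ^ 2 + ((p k).2 - 1 / n) ^ 2)) :=
            Real.tan_nonneg_of_nonneg_of_le_pi_div_two harg0 hargl.le
          have hfk := hfB n hn1 _ hmem
          have hn1' : (1:ℝ) ≤ n := by exact_mod_cast hn1
          have hfge : (n:ℝ) ≤ f (p k) := by rw [hfk]; linarith
          have hle := le_abs_self (f (p k))
          by_cases hnN : n ≤ N
          · have h4 := h3 n (Finset.mem_Icc.mpr ⟨hn1, hnN⟩)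
            have hcpos : 0 < π / (2 * exRadius n) := by positivity
            rw [div_lt_iff₀ hcpos, mul_comm] at h4
            have h5 : C < Real.tan (π / (2 * exRadius n) *
                Real.sqrt ((p k).1 ^ 2 + ((p k).2 - 1 / n) ^ 2)) := by
              have hm := Real.strictMonoOn_tan (Real.arctan_mem_Ioo C)
                ⟨by linarith [Real.neg_pi_div_two_lt_arctan C], hargl⟩ h4
              rwa [Real.tan_arctan] at hm
            have h6 : C < f (p k) := by rw [hfk]; linarith
            linarith
          · push_neg at hnN
            have : (N:ℝ) < n := by exact_mod_cast hnN
            linarith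
        have hz0 : Filter.Tendsto (fun k => f (p k)) Filter.atTop (𝓝 0) :=
          Filter.Tendsto.congr' (hzero.mono fun k hk => hk.symm) tendsto_const_nhds
        rw [tendsto_nhds_unique hz hz0, hfa]
  apply IsSeqClosed.isClosed
  intro x q hx hq
  have hrep : ∀ k, x k = ((x k).1, f (x k).1) := by
    intro k
    obtain ⟨w, hw⟩ := hx k
    rw [← hw]
  have hp : Filter.Tendsto (fun k => (x k).1) Filter.atTop (𝓝 q.1) :=
    (continuous_fst.tendsto q).comp hq
  have hfp : Filter.Tendsto (fun k => f (x k).1) Filter.atTop (𝓝 q.2) := by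
    have h2 : Filter.Tendsto (fun k => (x k).2) Filter.atTop (𝓝 q.2) :=
      (continuous_snd.tendsto q).comp hq
    refine h2.congr fun k => ?_
    rw [hrep k]
  have := key _ _ _ hp hfp
  refine ⟨q.1, ?_⟩
  show (q.1, f q.1) = q
  rw [← this]
end

section
/- For n ≥ 1 let r_n = 1/(4n(n+1)) and let B_n = {(x,y) ∈ ℝ² : ((x)² + (y − 1/n)²)^(1/2) < r_n} be the open disc of radius r_n centered at (0, 1/n). Define f : ℝ² → ℝ by: f(x,y) = 0 if y ≥ 0 and (x,y) ∉ ⋃_{n≥1} B_n; f(x,y) = 1/y if y < 0; and f(x,y) = n + tan((π/(2 r_n)) · ((x)² + (y − 1/n)²)^(1/2)) if (x,y) ∈ B_n. Then the graph of f, {(p, f p) : p ∈ ℝ²}, is not a connected subset of ℝ² × ℝ. -/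
open Set Topology Real

/-- The graph of the example function `f` is not connected. -/
theorem stmt9 (f : ℝ × ℝ → ℝ)
    (hf0 : ∀ p : ℝ × ℝ, 0 ≤ p.2 → (∀ n : ℕ, 1 ≤ n → p ∉ exDisc n) → f p = 0)
    (hfneg : ∀ p : ℝ × ℝ, p.2 < 0 → f p = 1 / p.2)
    (hfB : ∀ n : ℕ, 1 ≤ n → ∀ p ∈ exDisc n,
      f p = n + Real.tan (π / (2 * exRadius n) *
        Real.sqrt (p.1 ^ 2 + (p.2 - 1 / n) ^ 2)))
    : ¬ IsConnected (Set.range fun p => (p, f p)) := by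
  rintro ⟨-, hconn⟩
  set U : Set ((ℝ × ℝ) × ℝ) := {q | q.1.2 < 0} with hUdef
  set V : Set ((ℝ × ℝ) × ℝ) := {q | -(1/2) < q.1.2 ∧ -(1/2) < q.2} with hVdef
  have hU : IsOpen U := isOpen_lt (continuous_snd.comp continuous_fst) continuous_const
  have hV : IsOpen V :=
    (isOpen_lt continuous_const (continuous_snd.comp continuous_fst)).inter
      (isOpen_lt continuous_const continuous_snd)
  have hcov : (Set.range fun p => (p, f p)) ⊆ U ∪ V := by
    rintro _ ⟨p, rfl⟩
    rcases lt_or_ge p.2 0 with h | h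
    · exact Or.inl h
    · refine Or.inr ⟨by simpa using (by linarith : -(1/2 : ℝ) < p.2), ?_⟩
      show -(1/2 : ℝ) < f p
      by_cases hB : ∃ n, 1 ≤ n ∧ p ∈ exDisc n
      · obtain ⟨n, hn, hp⟩ := hB
        have hn' : (1:ℝ) ≤ n := by exact_mod_cast hn
        have hr : 0 < exRadius n := by
          unfold exRadius; have : (0:ℝ) < n := by linarith
          positivity
        have hs : Real.sqrt (p.1 ^ 2 + (p.2 - 1 / n) ^ 2) < exRadius n := hp
        have hsnn : 0 ≤ Real.sqrt (p.1 ^ 2 + (p.2 - 1 / n) ^ 2) := Real.sqrt_nonneg _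
        have hc : 0 < π / (2 * exRadius n) := by
          have := Real.pi_pos; positivity
        have hkey : π / (2 * exRadius n) * exRadius n = π / 2 := by
          field_simp
        have harg : π / (2 * exRadius n) * Real.sqrt (p.1 ^ 2 + (p.2 - 1 / n) ^ 2) ≤ π / 2 := by
          have := mul_lt_mul_of_pos_left hs hc
          linarith [hkey ▸ this]
        have htan : 0 ≤ Real.tan (π / (2 * exRadius n) *
            Real.sqrt (p.1 ^ 2 + (p.2 - 1 / n) ^ 2)) :=
          Real.tan_nonneg_of_nonneg_of_le_pi_div_two (by positivity) harg
        rw [hfB n hn p hp]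
        linarith
      · push_neg at hB
        rw [hf0 p h (fun n hn => hB n hn)]
        norm_num
  have hUne : ((Set.range fun p => (p, f p)) ∩ U).Nonempty := by
    refine ⟨((0, -1), f (0, -1)), ⟨(0, -1), rfl⟩, ?_⟩
    show ((0:ℝ), (-1:ℝ)).2 < 0
    norm_num
  have hVne : ((Set.range fun p => (p, f p)) ∩ V).Nonempty := by
    refine ⟨((1, 0), f (1, 0)), ⟨(1, 0), rfl⟩, ?_, ?_⟩
    · norm_num
    · have hf : f (1, 0) = 0 := by
        apply hf0 (1, 0) (by norm_num)
        intro n hn hmem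
        have hn' : (1:ℝ) ≤ n := by exact_mod_cast hn
        have hmem' : Real.sqrt (((1:ℝ),(0:ℝ)).1 ^ 2 + (((1:ℝ),(0:ℝ)).2 - 1 / n) ^ 2) < exRadius n := hmem
        have h1 : (1:ℝ) ≤ Real.sqrt (((1:ℝ),(0:ℝ)).1 ^ 2 + (((1:ℝ),(0:ℝ)).2 - 1 / n) ^ 2) := by
          rw [show (1:ℝ) = Real.sqrt 1 from Real.sqrt_one.symm]
          apply Real.sqrt_le_sqrt
          simp only [Real.sqrt_one]
          nlinarith [sq_nonneg ((0:ℝ) - 1/n)]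
        have h2 : exRadius n ≤ 1/8 := by
          unfold exRadius
          apply one_div_le_one_div_of_le (by norm_num)
          nlinarith
        linarith
      show -(1/2:ℝ) < f (1, 0)
      rw [hf]; norm_num
  obtain ⟨q, ⟨p, rfl⟩, hqU, hqV⟩ := hconn U V hU hV hcov hUne hVne
  have h1 : p.2 < 0 := hqU
  have h2 : -(1/2:ℝ) < p.2 := hqV.1
  have h3 : -(1/2:ℝ) < f p := hqV.2
  have hfp : f p = 1 / p.2 := hfneg p h1
  have hne : p.2 ≠ 0 := ne_of_lt h1
  have hmul : 1 / p.2 * p.2 = 1 := by field_simp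
  nlinarith [hfp ▸ h3]
end
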